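/- arXiv:2110.01583 — 12 statements merged into one kernel-verified Lean document; each statement's English description precedes it below -/
import Mathlib

section
/- A key lemma for FDR control under arbitrary dependence: if P is a random variable satisfying P(P ≤ u) ≤ u for all u ∈ [0,1], β is a shape function arising from distribution ν, R is any positive-integer-valued random variable, and c > 0, then E[ 1(P ≤ c·β(R)) / R ] ≤ c. -/
open MeasureTheory

/-- Reshaping lemma (Blanchard–Roquain): if `P` is super-uniform on `[0,1]`,
`β` is a shape function arising from a distribution `ν` on the positive
reals, `R ≥ 1` is an integer-valued random variable (with arbitrary
dependence on `P`), and `c > 0`, then `E[1(P ≤ c·β(R)) / R] ≤ c`. -/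
theorem reshaping_lemma
    {Ω : Type*} [MeasurableSpace Ω] (μ : Measure Ω) [IsProbabilityMeasure μ]
    (ν : Measure ℝ) [IsProbabilityMeasure ν]
    (hνpos : ν (Set.Iic 0) = 0) (hνint : Integrable id ν)
    (β : ℝ → ℝ) (hβ : ∀ r, β r = ∫ x, (if x ≤ r then x else 0) ∂ν)
    (P : Ω → ℝ) (hPmeas : Measurable P) (hPrange : ∀ ω, P ω ∈ Set.Icc (0 : ℝ) 1)
    (hsup : ∀ u : ℝ, 0 ≤ u → u ≤ 1 → μ {ω | P ω ≤ u} ≤ ENNReal.ofReal u)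
    (R : Ω → ℕ) (hRmeas : Measurable R) (hR : ∀ ω, 1 ≤ R ω)
    (c : ℝ) (hc : 0 < c) :
    ∫ ω, (if P ω ≤ c * β (R ω) then (1 : ℝ) else 0) / (R ω : ℝ) ∂μ ≤ c := by
  classical
  have hx_pos : ∀ᵐ x ∂ν, 0 < x := by
    rw [ae_iff]
    simpa [not_lt, Set.Iic] using hνpos
  have hint : ∀ r : ℝ, Integrable (fun x => if x ≤ r then x else 0) ν := by
    intro r
    have h := hνint.indicator (measurableSet_Iic (a := r))
    exact h.congr (ae_of_all _ fun x => by simp [Set.indicator_apply])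
  have hβ0 : ∀ r, 0 ≤ β r := by
    intro r; rw [hβ r]
    refine integral_nonneg_of_ae ?_
    filter_upwards [hx_pos] with x hx
    by_cases h : x ≤ r <;> simp [h, hx.le]
  have hβmono : Monotone β := by
    intro r r' hrr'
    rw [hβ r, hβ r']
    refine integral_mono_ae (hint r) (hint r') ?_
    filter_upwards [hx_pos] with x hx
    by_cases h1 : x ≤ r
    · simp [h1, h1.trans hrr']
    · by_cases h2 : x ≤ r' <;> simp [h1, h2, hx.le]
  have hβmeas : Measurable β := hβmono.measurable
  set f : Ω → ℝ := fun ω => (if P ω ≤ c * β (R ω) then (1 : ℝ) else 0) / (R ω : ℝ) with hf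
  have hRcast : Measurable fun ω => ((R ω : ℝ)) := measurable_from_top.comp hRmeas
  have hSmeas : MeasurableSet {ω | P ω ≤ c * β (R ω)} :=
    measurableSet_le hPmeas (measurable_const.mul (hβmeas.comp hRcast))
  have hfmeas : Measurable f :=
    (Measurable.ite hSmeas measurable_const measurable_const).div hRcast
  have hf0 : ∀ ω, 0 ≤ f ω := by
    intro ω
    refine div_nonneg ?_ (Nat.cast_nonneg _)
    by_cases h : P ω ≤ c * β (R ω) <;> simp [h]
  show (∫ ω, f ω ∂μ) ≤ c
  rw [integral_eq_lintegral_of_nonneg_ae (ae_of_all μ hf0) hfmeas.aestronglyMeasurable]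
  refine ENNReal.toReal_le_of_le_ofReal hc.le ?_
  set K : ℝ → Ω → ENNReal := fun t ω => if P ω ≤ c * β (1 / t) then 1 else 0 with hK
  have hKmeas : Measurable (Function.uncurry fun (ω : Ω) (t : ℝ) => K t ω) := by
    have hset : MeasurableSet {p : Ω × ℝ | P p.1 ≤ c * β (1 / p.2)} :=
      measurableSet_le (hPmeas.comp measurable_fst)
        (measurable_const.mul (hβmeas.comp (measurable_const.div measurable_snd)))
    exact Measurable.ite hset measurable_const measurable_const
  have claimA : ∀ ω, ENNReal.ofReal (f ω) ≤ ∫⁻ t in Set.Ioc (0:ℝ) 1, K t ω := by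
    intro ω
    by_cases hP : P ω ≤ c * β (R ω)
    · have hRpos : (0:ℝ) < (R ω : ℝ) := by exact_mod_cast (hR ω)
      have hR1 : (1:ℝ) ≤ (R ω : ℝ) := by exact_mod_cast hR ω
      have hsub : Set.Ioc (0:ℝ) (1 / (R ω : ℝ)) ⊆ Set.Ioc (0:ℝ) 1 := by
        apply Set.Ioc_subset_Ioc le_rfl
        rw [div_le_one hRpos]; exact hR1
      have h1 : ∀ t ∈ Set.Ioc (0:ℝ) (1 / (R ω : ℝ)), K t ω = 1 := by
        intro t ht
        have ht0 : 0 < t := ht.1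
        have hRle : (R ω : ℝ) ≤ 1 / t := by
          rw [le_div_iff₀ ht0]
          calc (R ω : ℝ) * t ≤ (R ω : ℝ) * (1 / (R ω : ℝ)) :=
                mul_le_mul_of_nonneg_left ht.2 hRpos.le
            _ = 1 := mul_one_div_cancel hRpos.ne'
        have hβle : β (R ω) ≤ β (1 / t) := hβmono hRle
        have hcle : P ω ≤ c * β (1 / t) :=
          hP.trans (mul_le_mul_of_nonneg_left hβle hc.le)
        simp only [hK]
        exact if_pos hcle
      calc ENNReal.ofReal (f ω) = ENNReal.ofReal (1 / (R ω : ℝ)) := by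
            simp [hf, hP]
        _ = ∫⁻ _ in Set.Ioc (0:ℝ) (1 / (R ω : ℝ)), (1 : ENNReal) := by
            rw [setLIntegral_one, Real.volume_Ioc]; simp
        _ = ∫⁻ t in Set.Ioc (0:ℝ) (1 / (R ω : ℝ)), K t ω :=
            (setLIntegral_congr_fun measurableSet_Ioc (fun t ht => (h1 t ht).symm))
        _ ≤ ∫⁻ t in Set.Ioc (0:ℝ) 1, K t ω := lintegral_mono_set hsub
    · simp [hf, hP]
  have swap1 : (∫⁻ ω, (∫⁻ t in Set.Ioc (0:ℝ) 1, K t ω) ∂μ)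
      = ∫⁻ t in Set.Ioc (0:ℝ) 1, (∫⁻ ω, K t ω ∂μ) :=
    lintegral_lintegral_swap hKmeas.aemeasurable
  have stepC : ∀ t : ℝ, (∫⁻ ω, K t ω ∂μ) ≤ ENNReal.ofReal (c * β (1 / t)) := by
    intro t
    have hset : MeasurableSet {ω | P ω ≤ c * β (1 / t)} :=
      measurableSet_le hPmeas measurable_const
    have heq : (∫⁻ ω, K t ω ∂μ) = μ {ω | P ω ≤ c * β (1 / t)} := by
      rw [← lintegral_indicator_one hset]
      refine lintegral_congr fun ω => ?_
      simp [hK, Set.indicator_apply]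
    rw [heq]
    have hu0 : 0 ≤ c * β (1 / t) := mul_nonneg hc.le (hβ0 _)
    by_cases h1 : c * β (1 / t) ≤ 1
    · exact hsup _ hu0 h1
    · calc μ {ω | P ω ≤ c * β (1 / t)} ≤ 1 := prob_le_one
        _ = ENNReal.ofReal 1 := by simp
        _ ≤ ENNReal.ofReal (c * β (1 / t)) := ENNReal.ofReal_le_ofReal (le_of_not_ge h1)
  have hofβ : ∀ r : ℝ, ENNReal.ofReal (β r)
      = ∫⁻ x, ENNReal.ofReal (if x ≤ r then x else 0) ∂ν := by
    intro r
    rw [hβ r]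
    refine ofReal_integral_eq_lintegral_ofReal (hint r) ?_
    filter_upwards [hx_pos] with x hx
    by_cases h : x ≤ r <;> simp [h, hx.le]
  have hswap2meas : Measurable
      (Function.uncurry fun (t x : ℝ) => ENNReal.ofReal (if x ≤ 1 / t then x else 0)) := by
    have hset : MeasurableSet {p : ℝ × ℝ | p.2 ≤ 1 / p.1} :=
      measurableSet_le measurable_snd (measurable_const.div measurable_fst)
    exact (Measurable.ite hset measurable_snd measurable_const).ennreal_ofReal
  have swap2 : (∫⁻ t in Set.Ioc (0:ℝ) 1, ∫⁻ x, ENNReal.ofReal (if x ≤ 1 / t then x else 0) ∂ν)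
      = ∫⁻ x, (∫⁻ t in Set.Ioc (0:ℝ) 1, ENNReal.ofReal (if x ≤ 1 / t then x else 0)) ∂ν :=
    lintegral_lintegral_swap hswap2meas.aemeasurable
  have hinner : ∀ᵐ x ∂ν,
      (∫⁻ t in Set.Ioc (0:ℝ) 1, ENNReal.ofReal (if x ≤ 1 / t then x else 0)) ≤ 1 := by
    filter_upwards [hx_pos] with x hx
    have hb : ∀ t ∈ Set.Ioc (0:ℝ) 1, ENNReal.ofReal (if x ≤ 1 / t then x else 0)
        ≤ (Set.Ioc (0:ℝ) (1 / x)).indicator (fun _ => ENNReal.ofReal x) t := by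
      intro t ht
      by_cases hle : x ≤ 1 / t
      · have hxt : x * t ≤ 1 := by
          have := (le_div_iff₀ ht.1).mp hle
          linarith
        have htx : t ≤ 1 / x := by
          rw [le_div_iff₀ hx]; linarith
        rw [if_pos hle,
          Set.indicator_of_mem (Set.mem_Ioc.mpr ⟨ht.1, htx⟩ : t ∈ Set.Ioc (0:ℝ) (1/x))]
      · rw [if_neg hle]
        simp
    calc (∫⁻ t in Set.Ioc (0:ℝ) 1, ENNReal.ofReal (if x ≤ 1 / t then x else 0))
        ≤ ∫⁻ t in Set.Ioc (0:ℝ) 1,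
            (Set.Ioc (0:ℝ) (1 / x)).indicator (fun _ => ENNReal.ofReal x) t :=
          lintegral_mono_ae ((ae_restrict_iff' measurableSet_Ioc).mpr (ae_of_all _ hb))
      _ ≤ ∫⁻ t, (Set.Ioc (0:ℝ) (1 / x)).indicator (fun _ => ENNReal.ofReal x) t :=
          setLIntegral_le_lintegral _ _
      _ = ENNReal.ofReal x * volume (Set.Ioc (0:ℝ) (1 / x)) := by
          rw [lintegral_indicator measurableSet_Ioc, setLIntegral_const]
      _ = ENNReal.ofReal x * ENNReal.ofReal (1 / x) := by
          rw [Real.volume_Ioc]; norm_num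
      _ = ENNReal.ofReal (x * (1 / x)) := (ENNReal.ofReal_mul hx.le).symm
      _ = 1 := by rw [mul_one_div_cancel hx.ne']; simp
  have stepD : (∫⁻ t in Set.Ioc (0:ℝ) 1, ENNReal.ofReal (c * β (1 / t)))
      ≤ ENNReal.ofReal c := by
    have h1 : ∀ t : ℝ, ENNReal.ofReal (c * β (1 / t))
        = ENNReal.ofReal c * ENNReal.ofReal (β (1 / t)) := fun t => ENNReal.ofReal_mul hc.le
    simp_rw [h1, hofβ]
    rw [lintegral_const_mul' _ _ ENNReal.ofReal_ne_top, swap2]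
    calc ENNReal.ofReal c * ∫⁻ x, (∫⁻ t in Set.Ioc (0:ℝ) 1,
            ENNReal.ofReal (if x ≤ 1 / t then x else 0)) ∂ν
        ≤ ENNReal.ofReal c * ∫⁻ _, (1 : ENNReal) ∂ν :=
          mul_le_mul_right (lintegral_mono_ae hinner) _
      _ = ENNReal.ofReal c := by simp
  calc (∫⁻ ω, ENNReal.ofReal (f ω) ∂μ)
      ≤ ∫⁻ ω, (∫⁻ t in Set.Ioc (0:ℝ) 1, K t ω) ∂μ := lintegral_mono claimA
    _ = ∫⁻ t in Set.Ioc (0:ℝ) 1, (∫⁻ ω, K t ω ∂μ) := swap1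
    _ ≤ ∫⁻ t in Set.Ioc (0:ℝ) 1, ENNReal.ofReal (c * β (1 / t)) :=
        lintegral_mono fun t => stepC t
    _ ≤ ENNReal.ofReal c := stepD
end

section
/- A super-uniformity lemma for positive dependence: if P is super-uniform, R is a positive-integer-valued random variable such that P(R ≤ r | P ≤ u) is nondecreasing in u for every positive integer r, and c > 0, then E[ 1(P ≤ c·R) / R ] ≤ c. -/
open MeasureTheory

/-- Super-uniformity lemma under positive dependence: if `P` is super-uniform
on `[0,1]`, `R ≥ 1` is an integer-valued random variable such that
`P(R ≤ r | P ≤ u)` is nondecreasing in `u` for every positive integer `r`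
(wherever the conditioning event has positive probability), and `c > 0`,
then `E[1(P ≤ c·R) / R] ≤ c`. -/
theorem superuniformity_lemma_posdep
    {Ω : Type*} [MeasurableSpace Ω] (μ : Measure Ω) [IsProbabilityMeasure μ]
    (P : Ω → ℝ) (hPmeas : Measurable P) (hPrange : ∀ ω, P ω ∈ Set.Icc (0 : ℝ) 1)
    (hsup : ∀ u : ℝ, 0 ≤ u → u ≤ 1 → μ {ω | P ω ≤ u} ≤ ENNReal.ofReal u)
    (R : Ω → ℕ) (hRmeas : Measurable R) (hR : ∀ ω, 1 ≤ R ω)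
    (hposdep : ∀ r : ℕ, 0 < r → ∀ u v : ℝ, 0 ≤ u → u ≤ v → v ≤ 1 →
      μ {ω | P ω ≤ u} ≠ 0 →
      μ ({ω | R ω ≤ r} ∩ {ω | P ω ≤ u}) / μ {ω | P ω ≤ u}
        ≤ μ ({ω | R ω ≤ r} ∩ {ω | P ω ≤ v}) / μ {ω | P ω ≤ v})
    (c : ℝ) (hc : 0 < c) :
    ∫ ω, (if P ω ≤ c * (R ω : ℝ) then (1 : ℝ) else 0) / (R ω : ℝ) ∂μ ≤ c := by
  classical
  have hRcast : Measurable fun ω => (R ω : ℝ) := measurable_from_top.comp hRmeas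
  have hPset : ∀ u : ℝ, MeasurableSet {ω | P ω ≤ u} := fun u => hPmeas measurableSet_Iic
  have hRset : ∀ r : ℕ, MeasurableSet {ω | R ω ≤ r} := fun r => hRmeas (measurableSet_Iic)
  -- abbreviations
  set f : Ω → ℝ := fun ω => (if P ω ≤ c * (R ω : ℝ) then (1 : ℝ) else 0) / (R ω : ℝ) with hfdef
  set q : ℕ → ℝ := fun r => min (c * r) 1 with hqdef
  set A : ℕ → ℝ → ℝ := fun r u => (μ ({ω | R ω ≤ r} ∩ {ω | P ω ≤ u})).toReal with hAdef
  set p : ℝ → ℝ := fun u => (μ {ω | P ω ≤ u}).toReal with hpdef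
  set G : ℕ → ℝ := fun r => if p (q r) = 0 then 0 else A r (q r) / p (q r) with hGdef
  set a : ℕ → ℝ := fun r => (μ ({ω | R ω = r} ∩ {ω | P ω ≤ c * r})).toReal / r with hadef
  have hq0 : ∀ r : ℕ, 0 ≤ q r := fun r =>
    le_min (mul_nonneg hc.le (Nat.cast_nonneg r)) zero_le_one
  have hq1 : ∀ r : ℕ, q r ≤ 1 := fun r => min_le_right _ _
  have hqmono : Monotone q := fun i j hij =>
    min_le_min (mul_le_mul_of_nonneg_left (Nat.cast_le.2 hij) hc.le) le_rfl
  have hpmono : ∀ u v : ℝ, u ≤ v → p u ≤ p v := fun u v huv =>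
    ENNReal.toReal_mono (measure_ne_top μ _)
      (measure_mono fun ω hω => le_trans hω huv)
  have hpnonneg : ∀ u, 0 ≤ p u := fun u => ENNReal.toReal_nonneg
  have hAp : ∀ r u, A r u ≤ p u := fun r u =>
    ENNReal.toReal_mono (measure_ne_top μ _) (measure_mono Set.inter_subset_right)
  have hAnonneg : ∀ r u, 0 ≤ A r u := fun r u => ENNReal.toReal_nonneg
  have hAmonor : ∀ r s : ℕ, r ≤ s → ∀ u, A r u ≤ A s u := fun r s hrs u =>
    ENNReal.toReal_mono (measure_ne_top μ _)
      (measure_mono (Set.inter_subset_inter_left _ fun ω hω => le_trans hω hrs))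
  have hpq : ∀ r : ℕ, p (q r) ≤ q r := fun r =>
    ENNReal.toReal_le_of_le_ofReal (hq0 r) (hsup (q r) (hq0 r) (hq1 r))
  -- positive dependence in real form
  have hkey : ∀ r : ℕ, 0 < r → ∀ u v : ℝ, 0 ≤ u → u ≤ v → v ≤ 1 → p u ≠ 0 →
      A r u / p u ≤ A r v / p v := by
    intro r hr u v hu huv hv hpu
    have h0 : μ {ω | P ω ≤ u} ≠ 0 := by
      intro h; exact hpu (by simp [hpdef, h])
    have h0v : μ {ω | P ω ≤ v} ≠ 0 := by
      intro h
      exact hpu (le_antisymm (le_trans (hpmono u v huv) (by simp [hpdef, h])) (hpnonneg u))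
    have h := hposdep r hr u v hu huv hv h0
    have hne : μ ({ω | R ω ≤ r} ∩ {ω | P ω ≤ v}) / μ {ω | P ω ≤ v} ≠ ⊤ :=
      (ENNReal.div_lt_top (measure_ne_top μ _) h0v).ne
    have := ENNReal.toReal_mono hne h
    rwa [ENNReal.toReal_div, ENNReal.toReal_div] at this
  have hG0 : G 0 = 0 := by
    have : μ {ω | P ω ≤ q 0} = 0 := by
      have := hsup (q 0) (hq0 0) (hq1 0)
      simpa [hqdef] using this
    simp [hGdef, hpdef, this]
  have hGnonneg : ∀ r, 0 ≤ G r := by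
    intro r
    rw [hGdef]
    dsimp only
    split_ifs
    · exact le_rfl
    · exact div_nonneg (hAnonneg _ _) (hpnonneg _)
  have hGle1 : ∀ r, G r ≤ 1 := by
    intro r
    rw [hGdef]; dsimp only
    split_ifs with h
    · exact zero_le_one
    · exact div_le_one_of_le₀ (hAp _ _) (hpnonneg _)
  -- the key pointwise bound
  have hmain : ∀ i : ℕ, a i ≤ c * (G i - G (i - 1)) := by
    intro i
    match i with
    | 0 =>
      simp [hadef, hG0]
    | Nat.succ r =>
      have hs1 : (1 : ℕ) ≤ r + 1 := Nat.le_add_left 1 r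
      set s := r + 1 with hs
      set u := q s with hu
      have hupos : 0 ≤ u := hq0 s
      have hu1 : u ≤ 1 := hq1 s
      have hscast : (0 : ℝ) < (s : ℝ) := by positivity
      -- the p-u positivity things
      have hpuA : A s u = G s * p u := by
        by_cases hpz : p u = 0
        · have : A s u = 0 := le_antisymm (hpz ▸ hAp s u) (hAnonneg s u)
          rw [this, hpz, mul_zero]
        · rw [hGdef]; dsimp only
          rw [if_neg hpz, div_mul_cancel₀ _ hpz]
      have hGrA : G r * p u ≤ A r u := by
        by_cases hpz : p (q r) = 0
        · rw [hGdef]; dsimp only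
          rw [if_pos hpz, zero_mul]
          exact hAnonneg r u
        · have hr1 : 0 < r := by
            rcases Nat.eq_zero_or_pos r with h0 | h; swap
            · exact h
            · exfalso
              apply hpz
              rw [h0]
              have : μ {ω | P ω ≤ q 0} = 0 := by
                have := hsup (q 0) (hq0 0) (hq1 0)
                simpa [hqdef] using this
              simp [hpdef, this]
          have hqru : q r ≤ u := hqmono (Nat.le_succ r)
          have hdiv := hkey r hr1 (q r) u (hq0 r) hqru hu1 hpz
          have hpupos : 0 < p u :=
            lt_of_lt_of_le (lt_of_le_of_ne (hpnonneg _) (Ne.symm hpz)) (hpmono _ _ hqru)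
          have : G r ≤ A r u / p u := by
            rw [hGdef]; dsimp only
            rw [if_neg hpz]; exact hdiv
          calc G r * p u ≤ (A r u / p u) * p u :=
                mul_le_mul_of_nonneg_right this hpupos.le
            _ = A r u := div_mul_cancel₀ _ hpupos.ne'
      have hGmono : G r ≤ G s := by
        by_cases hpz : p (q r) = 0
        · rw [hGdef]; dsimp only
          rw [if_pos hpz]
          exact hGnonneg s
        · have hqru : q r ≤ u := hqmono (Nat.le_succ r)
          have hpupos : 0 < p u :=
            lt_of_lt_of_le (lt_of_le_of_ne (hpnonneg _) (Ne.symm hpz)) (hpmono _ _ hqru)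
          have h1 : G r * p u ≤ G s * p u := by
            calc G r * p u ≤ A r u := hGrA
              _ ≤ A s u := hAmonor r s (Nat.le_succ r) u
              _ = G s * p u := hpuA
          exact le_of_mul_le_mul_right h1 hpupos
      -- identify a s
      have hsetid : {ω | R ω = s} ∩ {ω | P ω ≤ c * (s : ℕ)} =
          ({ω | R ω ≤ s} ∩ {ω | P ω ≤ u}) \ ({ω | R ω ≤ r} ∩ {ω | P ω ≤ u}) := by
        ext ω
        simp only [Set.mem_inter_iff, Set.mem_diff, Set.mem_setOf_eq]
        have hcu : P ω ≤ c * (s : ℝ) ↔ P ω ≤ u :=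
          ⟨fun h => le_min h (hPrange ω).2, fun h => h.trans (min_le_left _ _)⟩
        constructor
        · rintro ⟨h1, h2⟩
          rw [hcu] at h2
          refine ⟨⟨le_of_eq h1, h2⟩, ?_⟩
          rintro ⟨h3, -⟩
          omega
        · rintro ⟨⟨h1, h2⟩, h3⟩
          have : ¬ R ω ≤ r := fun hcon => h3 ⟨hcon, h2⟩
          exact ⟨by omega, hcu.2 h2⟩
      have hsub : ({ω | R ω ≤ r} ∩ {ω | P ω ≤ u}) ⊆ ({ω | R ω ≤ s} ∩ {ω | P ω ≤ u}) :=
        Set.inter_subset_inter_left _ fun ω hω => le_trans hω (Nat.le_succ r)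
      have hmeasdiff : μ ({ω | R ω = s} ∩ {ω | P ω ≤ c * (s : ℕ)}) =
          μ ({ω | R ω ≤ s} ∩ {ω | P ω ≤ u}) - μ ({ω | R ω ≤ r} ∩ {ω | P ω ≤ u}) := by
        rw [hsetid]
        exact measure_diff hsub ((hRset r).inter (hPset u)).nullMeasurableSet
          (measure_ne_top μ _)
      have haval : a s = (A s u - A r u) / s := by
        rw [hadef]; dsimp only
        rw [hmeasdiff, ENNReal.toReal_sub_of_le
          (measure_mono hsub) (measure_ne_top μ _)]
      have hps : p u ≤ c * s := le_trans (hpq s) (min_le_left _ _)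
      have hpus : p u / s ≤ c := by
        rw [div_le_iff₀ hscast]
        exact hps
      calc a s = (A s u - A r u) / s := haval
        _ ≤ (G s * p u - G r * p u) / s := by
            have hnum : A s u - A r u ≤ G s * p u - G r * p u := by
              rw [hpuA]
              exact sub_le_sub_left hGrA _
            gcongr
        _ = (p u / s) * (G s - G r) := by ring
        _ ≤ c * (G s - G r) :=
            mul_le_mul_of_nonneg_right hpus (sub_nonneg.2 hGmono)
        _ = c * (G s - G (s - 1)) := by
            have h1 : s - 1 = r := by omega
            rw [h1]
  -- telescoping sum
  have hGsum : ∀ n : ℕ, ∑ i ∈ Finset.range n, (G i - G (i - 1)) = G (n - 1) := by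
    intro n
    induction n with
    | zero => simp [hG0]
    | succ m ih =>
      rw [Finset.sum_range_succ, ih]
      simp only [Nat.add_sub_cancel]
      ring
  have hpartial : ∀ n : ℕ, ∑ i ∈ Finset.range n, a i ≤ c := by
    intro n
    calc ∑ i ∈ Finset.range n, a i ≤ ∑ i ∈ Finset.range n, c * (G i - G (i - 1)) :=
          Finset.sum_le_sum fun i _ => hmain i
      _ = c * ∑ i ∈ Finset.range n, (G i - G (i - 1)) := by rw [Finset.mul_sum]
      _ = c * G (n - 1) := by rw [hGsum]
      _ ≤ c * 1 := mul_le_mul_of_nonneg_left (hGle1 _) hc.le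
      _ = c := mul_one c
  have hanonneg : ∀ i, 0 ≤ a i := fun i =>
    div_nonneg ENNReal.toReal_nonneg (Nat.cast_nonneg i)
  have htsum : ∑' i, a i ≤ c := Real.tsum_le_of_sum_range_le hanonneg hpartial
  -- identify the integral with the tsum
  have hcset : MeasurableSet {ω | P ω ≤ c * (R ω : ℝ)} :=
    measurableSet_le hPmeas (measurable_const.mul hRcast)
  have hfmeas : Measurable f := by
    apply Measurable.div
    · exact Measurable.ite hcset measurable_const measurable_const
    · exact hRcast
  have hfbound : ∀ ω, ‖f ω‖ ≤ 1 := by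
    intro ω
    rw [hfdef]
    dsimp only
    have h1 : (1 : ℝ) ≤ (R ω : ℝ) := by exact_mod_cast hR ω
    split_ifs with h
    · rw [Real.norm_eq_abs, abs_of_nonneg (by positivity)]
      rw [div_le_one (by linarith)]
      exact h1
    · simp
  have hfint : Integrable f μ :=
    Integrable.mono' (integrable_const 1) hfmeas.aestronglyMeasurable
      (Filter.Eventually.of_forall hfbound)
  set S : ℕ → Set Ω := fun r => {ω | R ω = r} with hSdef
  have hSmeas : ∀ r, MeasurableSet (S r) := fun r => hRmeas (measurableSet_singleton r)
  have hSdisj : Pairwise (Function.onFun Disjoint S) := by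
    intro i j hij
    simp only [Function.onFun, Set.disjoint_left]
    intro ω hi hj
    exact hij (hi.symm.trans hj)
  have hSunion : (⋃ r, S r) = Set.univ := by
    ext ω; simp [hSdef]
  have hint : ∫ ω, f ω ∂μ = ∑' r, ∫ ω in S r, f ω ∂μ := by
    rw [← setIntegral_univ, ← hSunion]
    exact integral_iUnion hSmeas hSdisj (hSunion ▸ hfint.integrableOn)
  have hterm : ∀ r : ℕ, ∫ ω in S r, f ω ∂μ = a r := by
    intro r
    match r with
    | 0 =>
      have hempty : S 0 = ∅ := by
        ext ω; simp only [hSdef, Set.mem_setOf_eq, Set.mem_empty_iff_false, iff_false]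
        have := hR ω; omega
      rw [hempty]
      simp [hadef]
    | Nat.succ k =>
      set r := k + 1 with hr
      have heq : Set.EqOn f
          (Set.indicator {ω | P ω ≤ c * (r : ℕ)} fun _ => (1 : ℝ) / r) (S r) := by
        intro ω hω
        have hωr : R ω = r := hω
        rw [hfdef]
        dsimp only
        rw [hωr, Set.indicator_apply]
        simp only [Set.mem_setOf_eq]
        split_ifs with h
        · rfl
        · simp
      rw [setIntegral_congr_fun (hSmeas r) heq]
      rw [setIntegral_indicator (measurableSet_le hPmeas measurable_const)]
      rw [setIntegral_const]
      rw [hadef]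
      dsimp only
      rw [smul_eq_mul, mul_one_div]
      rfl
  calc ∫ ω, f ω ∂μ = ∑' r, ∫ ω in S r, f ω ∂μ := hint
    _ = ∑' r, a r := by
        apply tsum_congr
        intro r; exact hterm r
    _ ≤ c := htsum
end

section
/- Self-consistency of the TOAD rejection set: at every stage t, every index i in the TOAD rejection set R_t satisfies P_i ≤ α·β(max(1,|R_t|))·A_i. -/
/-!
The rejection sets only grow. If `R_t` is self-consistent, the `m` indices of `R_t` that are
active again at stage `t + 1` pass the threshold `α β(m + |R^old|)`, so the step-up index `s` is
at least `m`, and since thresholds rise with `s` they are rejected again. Hence old rejections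
still pass the larger threshold `α β(|R_{t+1}|)`, while new ones pass `α β(s + |R^old|)` with
`s + |R^old| ≤ |R_{t+1}|`; induction on `t` concludes.
-/

open Finset Classical

/-- The set of "active" hypothesis indices at stage `t` (indices `i ≤ t`
whose deadline `d i` has not yet passed). -/
noncomputable def toadC (d : ℕ → ℕ) (t : ℕ) : Finset ℕ :=
  (Finset.Icc 1 t).filter (fun i => t ≤ d i)

/-- The TOAD rejection set at each stage: save old rejections
`Rold = R_{t-1} \ C_t`, take the step-up index
`s = max{j ≤ |C_t| : j ≤ #{i ∈ C_t : P_i ≤ α·β(j+|Rold|)·A_i}}`, and reject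
`Rold ∪ {i ∈ C_t : P_i ≤ α·β(s+|Rold|)·A_i}` (the condition
`P_i ≤ thr·A_i` encodes `W_i = P_i/A_i ≤ thr`, with `W_i = ∞` when `A_i = 0`
since p-values are strictly positive). -/
noncomputable def toadR (d : ℕ → ℕ) (A P : ℕ → ℝ) (α : ℝ) (β : ℕ → ℝ) : ℕ → Finset ℕ
  | 0 => ∅
  | t + 1 =>
    let C := toadC d (t + 1)
    let Rold := toadR d A P α β t \ C
    let s := Nat.findGreatest
      (fun j => j ≤ (C.filter (fun i => P i ≤ α * β (j + Rold.card) * A i)).card) C.card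
    Rold ∪ C.filter (fun i => P i ≤ α * β (s + Rold.card) * A i)

namespace Toad

variable {d : ℕ → ℕ} {A P : ℕ → ℝ} {α : ℝ} {β : ℕ → ℝ}

def IsSelfConsistent (A P : ℕ → ℝ) (α : ℝ) (β : ℕ → ℝ) (R : Finset ℕ) : Prop :=
  ∀ i ∈ R, P i ≤ α * β (max 1 R.card) * A i

/-- The indices of `C` that pass the threshold `α β(j + r)`, `r` being the number of old
rejections. -/
noncomputable def passing (A P : ℕ → ℝ) (α : ℝ) (β : ℕ → ℝ) (C : Finset ℕ) (r j : ℕ) :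
    Finset ℕ :=
  C.filter fun i => P i ≤ α * β (j + r) * A i

noncomputable def stepUp (A P : ℕ → ℝ) (α : ℝ) (β : ℕ → ℝ) (C : Finset ℕ) (r : ℕ) : ℕ :=
  Nat.findGreatest (fun j => j ≤ (passing A P α β C r j).card) C.card

theorem le_threshold_of_le (hα : 0 ≤ α) (hβ : Monotone β) (hA : ∀ i, 0 ≤ A i) {i j k : ℕ}
    (hjk : j ≤ k) (h : P i ≤ α * β j * A i) : P i ≤ α * β k * A i :=
  h.trans (mul_le_mul_of_nonneg_right (mul_le_mul_of_nonneg_left (hβ hjk) hα) (hA i))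

theorem passing_subset (C : Finset ℕ) (r j : ℕ) : passing A P α β C r j ⊆ C :=
  filter_subset _ _

theorem passing_mono (hα : 0 ≤ α) (hβ : Monotone β) (hA : ∀ i, 0 ≤ A i) (C : Finset ℕ)
    (r : ℕ) : Monotone (passing A P α β C r) := by
  intro j k hjk i hi
  simp only [passing, mem_filter] at hi ⊢
  exact ⟨hi.1, le_threshold_of_le hα hβ hA (by omega) hi.2⟩

theorem stepUp_le_card_passing (C : Finset ℕ) (r : ℕ) :
    stepUp A P α β C r ≤ (passing A P α β C r (stepUp A P α β C r)).card :=
  Nat.findGreatest_spec (P := fun j => j ≤ (passing A P α β C r j).card)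
    (Nat.zero_le _) (Nat.zero_le _)

theorem subset_passing_stepUp (hα : 0 ≤ α) (hβ : Monotone β) (hA : ∀ i, 0 ≤ A i)
    {C S : Finset ℕ} {r : ℕ} (hSC : S ⊆ C) (hS : S ⊆ passing A P α β C r S.card) :
    S ⊆ passing A P α β C r (stepUp A P α β C r) :=
  hS.trans <| passing_mono hα hβ hA C r <|
    Nat.le_findGreatest (card_le_card hSC) (card_le_card hS)

variable (d A P α β) in
theorem toadR_succ (t : ℕ) :
    toadR d A P α β (t + 1) =
      (toadR d A P α β t \ toadC d (t + 1)) ∪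
        passing A P α β (toadC d (t + 1)) (toadR d A P α β t \ toadC d (t + 1)).card
          (stepUp A P α β (toadC d (t + 1)) (toadR d A P α β t \ toadC d (t + 1)).card) :=
  rfl

variable (d A P α β) in
theorem stepUp_add_card_le_card_toadR_succ (t : ℕ) :
    stepUp A P α β (toadC d (t + 1)) (toadR d A P α β t \ toadC d (t + 1)).card
        + (toadR d A P α β t \ toadC d (t + 1)).card ≤ (toadR d A P α β (t + 1)).card := by
  set C := toadC d (t + 1)
  set Rold := toadR d A P α β t \ C
  have hdisj : Disjoint Rold (passing A P α β C Rold.card (stepUp A P α β C Rold.card)) :=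
    disjoint_sdiff_self_left.mono_right (passing_subset C _ _)
  rw [toadR_succ, card_union_of_disjoint hdisj, add_comm]
  exact Nat.add_le_add_left (stepUp_le_card_passing C _) _

theorem toadR_subset_succ (hα : 0 ≤ α) (hβ : Monotone β) (hA : ∀ i, 0 ≤ A i) {t : ℕ}
    (h : IsSelfConsistent A P α β (toadR d A P α β t)) :
    toadR d A P α β t ⊆ toadR d A P α β (t + 1) := by
  set C := toadC d (t + 1)
  set R := toadR d A P α β t
  have hcard : (R \ C).card + (R ∩ C).card = R.card := card_sdiff_add_card_inter R C
  have hactive : R ∩ C ⊆ passing A P α β C (R \ C).card (R ∩ C).card := by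
    intro i hi
    have hmax : max 1 R.card = (R ∩ C).card + (R \ C).card := by
      have := card_pos.2 ⟨i, hi⟩
      omega
    refine mem_filter.2 ⟨(mem_inter.1 hi).2, ?_⟩
    rw [← hmax]
    exact h i (mem_inter.1 hi).1
  have hreject := subset_passing_stepUp hα hβ hA inter_subset_right hactive
  rw [toadR_succ, ← sdiff_union_inter R C]
  exact union_subset_union subset_rfl hreject

theorem isSelfConsistent_toadR_succ (hα : 0 ≤ α) (hβ : Monotone β) (hA : ∀ i, 0 ≤ A i)
    {t : ℕ} (h : IsSelfConsistent A P α β (toadR d A P α β t)) :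
    IsSelfConsistent A P α β (toadR d A P α β (t + 1)) := by
  have hgrow := card_le_card (toadR_subset_succ hα hβ hA h)
  have hnew_le := stepUp_add_card_le_card_toadR_succ d A P α β t
  intro i hi
  rcases mem_union.1 (toadR_succ d A P α β t ▸ hi) with hold | hnew
  · exact le_threshold_of_le hα hβ hA (max_le_max le_rfl hgrow) (h i (mem_sdiff.1 hold).1)
  · exact le_threshold_of_le hα hβ hA (by omega) (mem_filter.1 hnew).2

end Toad

theorem toad_self_consistent_general
    (d : ℕ → ℕ)
    (A : ℕ → ℝ) (hA : ∀ i, 0 ≤ A i)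
    (P : ℕ → ℝ)
    (α : ℝ) (hα : α ∈ Set.Ioo (0 : ℝ) 1)
    (β : ℕ → ℝ) (hβ : Monotone β) :
    ∀ t : ℕ, ∀ i ∈ toadR d A P α β t,
      P i ≤ α * β (max 1 (toadR d A P α β t).card) * A i := by
  intro t
  induction t with
  | zero => simp [toadR]
  | succ t ih => exact Toad.isSelfConsistent_toadR_succ hα.1.le hβ hA ih

/-- Self-consistency of the TOAD rejection set: at every stage `t`, every
index `i ∈ R_t` satisfies `P_i ≤ α·β(max(1,|R_t|))·A_i`. -/
theorem toad_self_consistent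
    (d : ℕ → ℕ) (hd : ∀ i, i ≤ d i)
    (A : ℕ → ℝ) (hA : ∀ i, 0 ≤ A i)
    (P : ℕ → ℝ) (hP : ∀ i, 0 < P i)
    (α : ℝ) (hα : α ∈ Set.Ioo (0 : ℝ) 1)
    (β : ℕ → ℝ) (hβ : Monotone β) (hβ0 : β 0 = 0) :
    ∀ t : ℕ, ∀ i ∈ toadR d A P α β t,
      P i ≤ α * β (max 1 (toadR d A P α β t).card) * A i :=
  toad_self_consistent_general d A hA P α hα β hβ
end

section
/- Maximality of the TOAD rejection set: at every stage t, R_t is the largest subset S of {1,...,t} satisfying (1) S \ C_t = R_{t-1} \ C_t and (2) P_i ≤ α·β(max(1,|S|))·A_i for all i ∈ S ∩ C_t. -/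
open Finset Classical

/-! A set `T ⊆ C` all of whose members pass the level-`|T|` test has `|T|` among the candidate
step-up indices, so `|T| ≤ s`; since the tests only get weaker as the level grows, `T` is
contained in the set selected at level `s`. -/

lemma card_le_findGreatest_of_subset {ι : Type*} {p : ℕ → ι → Prop}
    [∀ j, DecidablePred (p j)] {C T : Finset ι} (hTC : T ⊆ C) (hT : ∀ i ∈ T, p #T i) :
    #T ≤ Nat.findGreatest (fun j => j ≤ #(C.filter (p j))) #C :=
  Nat.le_findGreatest (card_le_card hTC)
    (card_le_card fun i hi => mem_filter.mpr ⟨hTC hi, hT i hi⟩)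

lemma subset_filter_findGreatest {ι : Type*} {p : ℕ → ι → Prop}
    [∀ j, DecidablePred (p j)] (hp : ∀ i, Monotone fun j => p j i)
    {C T : Finset ι} (hTC : T ⊆ C) (hT : ∀ i ∈ T, p #T i) :
    T ⊆ C.filter (p (Nat.findGreatest (fun j => j ≤ #(C.filter (p j))) #C)) :=
  fun i hi => mem_filter.mpr
    ⟨hTC hi, hp i (card_le_findGreatest_of_subset hTC hT) (hT i hi)⟩

lemma monotone_weighted_threshold {A P : ℕ → ℝ} (hA : ∀ i, 0 ≤ A i) {α : ℝ} (hα : 0 ≤ α)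
    {β : ℕ → ℝ} (hβ : Monotone β) (r i : ℕ) :
    Monotone fun j => P i ≤ α * β (j + r) * A i :=
  fun _ _ hjk hle => hle.trans <| mul_le_mul_of_nonneg_right
    (mul_le_mul_of_nonneg_left (hβ (Nat.add_le_add_right hjk r)) hα) (hA i)

theorem toad_maximal_general
    (d : ℕ → ℕ)
    (A : ℕ → ℝ) (hA : ∀ i, 0 ≤ A i)
    (P : ℕ → ℝ)
    (α : ℝ) (hα : α ∈ Set.Ioo (0 : ℝ) 1)
    (β : ℕ → ℝ) (hβ : Monotone β) :
    ∀ t : ℕ, ∀ S : Finset ℕ, S ⊆ Finset.Icc 1 (t + 1) →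
      S \ toadC d (t + 1) = toadR d A P α β t \ toadC d (t + 1) →
      (∀ i ∈ S ∩ toadC d (t + 1), P i ≤ α * β (max 1 S.card) * A i) →
      S ⊆ toadR d A P α β (t + 1) ∧ S.card ≤ (toadR d A P α β (t + 1)).card := by
  intro t S _ hold hthr
  set C := toadC d (t + 1)
  set Rold := toadR d A P α β t \ C
  have hcard : #(S ∩ C) + #Rold = #S := hold ▸ card_inter_add_card_sdiff S C
  have hnew : S ∩ C ⊆ C.filter fun i => P i ≤ α * β (Nat.findGreatest
      (fun j => j ≤ #(C.filter fun i => P i ≤ α * β (j + #Rold) * A i)) #C + #Rold) * A i :=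
    subset_filter_findGreatest (p := fun j i => P i ≤ α * β (j + #Rold) * A i)
      (monotone_weighted_threshold hA hα.1.le hβ #Rold) inter_subset_right fun i hi => by
        have hS : 1 ≤ #S := card_pos.mpr ⟨i, mem_of_mem_inter_left hi⟩
        simpa only [hcard, max_eq_right hS] using hthr i hi
  have hsub : S ⊆ toadR d A P α β (t + 1) := by
    rw [← sdiff_union_inter S C, hold]
    exact union_subset_union subset_rfl hnew
  exact ⟨hsub, card_le_card hsub⟩

/-- Maximality of the TOAD rejection set: at every stage `t+1`, the TOAD
rejection set `R_{t+1}` contains (and hence has cardinality at least that of)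
every set `S ⊆ {1,…,t+1}` satisfying (1) `S \ C_{t+1} = R_t \ C_{t+1}` and
(2) `P_i ≤ α·β(max(1,|S|))·A_i` for every `i ∈ S ∩ C_{t+1}`. -/
theorem toad_maximal
    (d : ℕ → ℕ) (hd : ∀ i, i ≤ d i)
    (A : ℕ → ℝ) (hA : ∀ i, 0 ≤ A i)
    (P : ℕ → ℝ) (hP : ∀ i, 0 < P i)
    (α : ℝ) (hα : α ∈ Set.Ioo (0 : ℝ) 1)
    (β : ℕ → ℝ) (hβ : Monotone β) (hβ0 : β 0 = 0) :
    ∀ t : ℕ, ∀ S : Finset ℕ, S ⊆ Finset.Icc 1 (t + 1) →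
      S \ toadC d (t + 1) = toadR d A P α β t \ toadC d (t + 1) →
      (∀ i ∈ S ∩ toadC d (t + 1), P i ≤ α * β (max 1 S.card) * A i) →
      S ⊆ toadR d A P α β (t + 1) ∧ S.card ≤ (toadR d A P α β (t + 1)).card :=
  toad_maximal_general d A hA P α hα β hβ
end

section
/- Monotonicity of TOAD rejections: for every stage t, R_{t-1} ⊆ R_t; hence R_s ⊆ R_t whenever s ≤ t. -/
/-!
A hypothesis rejected at stage `t` either has expired, and is then kept in `R^old_{t+1}`, or is
still active. An active one was already active at stage `t`, so it passed the threshold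
`α·β(S_t + |R^old_t|)`, and `S_t + |R^old_t| ≤ |R_t|`. Conversely the set `K` of rejected
hypotheses still active at stage `t + 1` witnesses `S_{t+1} ≥ |K|` in the step-up search, so the
new threshold is at least `α·β(|K| + |R^old_{t+1}|) = α·β(|R_t|)` and all of `K` is rejected again.
-/

open Finset Classical

section StepUp

variable {ι : Type*} (C : Finset ι) (p : ℕ → ι → Prop) [∀ j, DecidablePred (p j)]

theorem findGreatest_le_card_filter :
    Nat.findGreatest (fun j => j ≤ #(C.filter (p j))) #C ≤
      #(C.filter (p (Nat.findGreatest (fun j => j ≤ #(C.filter (p j))) #C))) :=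
  Nat.findGreatest_spec (P := fun j => j ≤ #(C.filter (p j))) (Nat.zero_le _) (Nat.zero_le _)

variable {C p} in
theorem card_le_findGreatest_of_subset_filter {K : Finset ι} (hK : K ⊆ C.filter (p #K)) :
    #K ≤ Nat.findGreatest (fun j => j ≤ #(C.filter (p j))) #C :=
  Nat.le_findGreatest (card_le_card (hK.trans (filter_subset _ _))) (card_le_card hK)

end StepUp

noncomputable def toadOld (d : ℕ → ℕ) (A P : ℕ → ℝ) (α : ℝ) (β : ℕ → ℝ) (t : ℕ) : Finset ℕ :=
  toadR d A P α β t \ toadC d (t + 1)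

/-- `S_{t+1} + |R^old_{t+1}|`, the argument of `β` in the rejection threshold of stage `t + 1`. -/
noncomputable def toadLevel (d : ℕ → ℕ) (A P : ℕ → ℝ) (α : ℝ) (β : ℕ → ℝ) (t : ℕ) : ℕ :=
  Nat.findGreatest (fun j => j ≤ #((toadC d (t + 1)).filter
      (fun i => P i ≤ α * β (j + #(toadOld d A P α β t)) * A i))) #(toadC d (t + 1)) +
    #(toadOld d A P α β t)

section TOAD

variable {d : ℕ → ℕ} {A P : ℕ → ℝ} {α : ℝ} {β : ℕ → ℝ}

theorem toadR_succ (t : ℕ) :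
    toadR d A P α β (t + 1) = toadOld d A P α β t ∪
      (toadC d (t + 1)).filter (fun i => P i ≤ α * β (toadLevel d A P α β t) * A i) :=
  rfl

theorem le_of_mem_toadR {t i : ℕ} (hi : i ∈ toadR d A P α β t) : i ≤ t := by
  induction t with
  | zero => simp [toadR] at hi
  | succ t ih =>
    rcases mem_union.1 (toadR_succ t ▸ hi) with hold | hnew
    · exact (ih (mem_sdiff.1 hold).1).trans t.le_succ
    · exact (mem_Icc.1 (mem_filter.1 (mem_filter.1 hnew).1).1).2

theorem mem_toadC_of_mem_toadC_succ {t i : ℕ} (hit : i ≤ t) (hi : i ∈ toadC d (t + 1)) :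
    i ∈ toadC d t := by
  simp only [toadC, mem_filter, mem_Icc] at hi ⊢
  omega

theorem toadLevel_le_card_toadR_succ (t : ℕ) :
    toadLevel d A P α β t ≤ #(toadR d A P α β (t + 1)) := by
  have hdisj : Disjoint (toadOld d A P α β t)
      ((toadC d (t + 1)).filter (fun i => P i ≤ α * β (toadLevel d A P α β t) * A i)) :=
    disjoint_sdiff_self_left.mono_right (filter_subset _ _)
  have hS := findGreatest_le_card_filter (toadC d (t + 1))
    (fun j i => P i ≤ α * β (j + #(toadOld d A P α β t)) * A i)
  rw [toadR_succ, card_union_of_disjoint hdisj]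
  unfold toadLevel at *
  omega

variable (hα : 0 ≤ α) (hβ : Monotone β) (hA : ∀ i, 0 ≤ A i)
include hα hβ hA

theorem toad_threshold_mono {m n : ℕ} (hmn : m ≤ n) (i : ℕ) :
    α * β m * A i ≤ α * β n * A i :=
  mul_le_mul_of_nonneg_right (mul_le_mul_of_nonneg_left (hβ hmn) hα) (hA i)

theorem toadR_inter_toadC_succ_subset (t : ℕ) :
    toadR d A P α β t ∩ toadC d (t + 1) ⊆
      (toadC d (t + 1)).filter (fun i => P i ≤ α * β #(toadR d A P α β t) * A i) := by
  cases t with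
  | zero => simp [toadR]
  | succ t =>
    intro i hi
    obtain ⟨hR, hC⟩ := mem_inter.1 hi
    have hCt : i ∈ toadC d (t + 1) := mem_toadC_of_mem_toadC_succ (le_of_mem_toadR hR) hC
    have hnew : i ∈ (toadC d (t + 1)).filter
        (fun i => P i ≤ α * β (toadLevel d A P α β t) * A i) := by
      rcases mem_union.1 (toadR_succ t ▸ hR) with hold | hnew
      · exact absurd hCt (mem_sdiff.1 hold).2
      · exact hnew
    exact mem_filter.2 ⟨hC, (mem_filter.1 hnew).2.trans
      (toad_threshold_mono hα hβ hA (toadLevel_le_card_toadR_succ t) i)⟩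

theorem card_toadR_le_toadLevel (t : ℕ) : #(toadR d A P α β t) ≤ toadLevel d A P α β t := by
  set K := toadR d A P α β t ∩ toadC d (t + 1)
  have hsplit : #K + #(toadOld d A P α β t) = #(toadR d A P α β t) :=
    card_inter_add_card_sdiff _ _
  have hK : K ⊆ (toadC d (t + 1)).filter
      (fun i => P i ≤ α * β (#K + #(toadOld d A P α β t)) * A i) := by
    rw [hsplit]
    exact toadR_inter_toadC_succ_subset hα hβ hA t
  have := card_le_findGreatest_of_subset_filter
    (p := fun j i => P i ≤ α * β (j + #(toadOld d A P α β t)) * A i) hK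
  unfold toadLevel
  omega

theorem toadR_subset_succ (t : ℕ) : toadR d A P α β t ⊆ toadR d A P α β (t + 1) := by
  intro i hi
  rw [toadR_succ]
  by_cases hC : i ∈ toadC d (t + 1)
  · have hpass :=
      (mem_filter.1 (toadR_inter_toadC_succ_subset hα hβ hA t (mem_inter.2 ⟨hi, hC⟩))).2
    exact mem_union_right _ (mem_filter.2 ⟨hC, hpass.trans
      (toad_threshold_mono hα hβ hA (card_toadR_le_toadLevel hα hβ hA t) i)⟩)
  · exact mem_union_left _ (mem_sdiff.2 ⟨hi, hC⟩)

end TOAD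

theorem toad_monotone_general
    (d : ℕ → ℕ)
    (A : ℕ → ℝ) (hA : ∀ i, 0 ≤ A i)
    (P : ℕ → ℝ)
    (α : ℝ) (hα : α ∈ Set.Ioo (0 : ℝ) 1)
    (β : ℕ → ℝ) (hβ : Monotone β) :
    (∀ t : ℕ, toadR d A P α β t ⊆ toadR d A P α β (t + 1)) ∧
    (∀ s t : ℕ, s ≤ t → toadR d A P α β s ⊆ toadR d A P α β t) := by
  have hmono : Monotone (toadR d A P α β) :=
    monotone_nat_of_le_succ (toadR_subset_succ hα.1.le hβ hA)
  exact ⟨fun t => hmono t.le_succ, fun _ _ hst => hmono hst⟩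

/-- Monotonicity of TOAD rejections: a hypothesis once rejected is never
un-rejected, i.e. `R_t ⊆ R_{t+1}` for every stage `t`, and hence
`R_s ⊆ R_t` whenever `s ≤ t`. -/
theorem toad_monotone
    (d : ℕ → ℕ) (hd : ∀ i, i ≤ d i)
    (A : ℕ → ℝ) (hA : ∀ i, 0 ≤ A i)
    (P : ℕ → ℝ) (hP : ∀ i, 0 < P i)
    (α : ℝ) (hα : α ∈ Set.Ioo (0 : ℝ) 1)
    (β : ℕ → ℝ) (hβ : Monotone β) (hβ0 : β 0 = 0) :
    (∀ t : ℕ, toadR d A P α β t ⊆ toadR d A P α β (t + 1)) ∧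
    (∀ s t : ℕ, s ≤ t → toadR d A P α β s ⊆ toadR d A P α β t) :=
  toad_monotone_general d A hA P α hα β hβ
end

section
/- TOAD reduces to BH: if all deadlines are d_i = m (so C_t = {1,...,t} for each t ≤ m), β is the identity, and A_i = 1/m for all i, then the TOAD rejection set at stage m equals the Benjamini–Hochberg rejection set at level α applied to P_1,...,P_m. -/
open Finset Classical

lemma toadR_subset_Icc (d : ℕ → ℕ) (A P : ℕ → ℝ) (α : ℝ) (β : ℕ → ℝ) :
    ∀ t, toadR d A P α β t ⊆ Icc 1 t
  | 0 => by simp [toadR]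
  | t + 1 => by
    intro i hi
    rcases mem_union.1 hi with hold | hnew
    · exact Icc_subset_Icc_right t.le_succ (toadR_subset_Icc d A P α β t (mem_sdiff.1 hold).1)
    · exact mem_of_mem_filter i (mem_filter.1 hnew).1

lemma toadC_eq_Icc {d : ℕ → ℕ} {t : ℕ} (hd : ∀ i, t ≤ d i) : toadC d t = Icc 1 t := by
  simp [toadC, hd]

/-- Before any deadline has passed, nothing is carried over from earlier stages, so stage `t + 1`
is a single step-up procedure on all of `P₁, …, P_{t+1}`. -/
lemma toadR_succ_of_le_deadline {d : ℕ → ℕ} (A P : ℕ → ℝ) (α : ℝ) (β : ℕ → ℝ) {t : ℕ}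
    (hd : ∀ i, t + 1 ≤ d i) :
    toadR d A P α β (t + 1) = (Icc 1 (t + 1)).filter (fun i => P i ≤ α * β
      (Nat.findGreatest (fun j => j ≤ ((Icc 1 (t + 1)).filter
        (fun i => P i ≤ α * β j * A i)).card) (t + 1)) * A i) := by
  have hRold : toadR d A P α β t \ Icc 1 (t + 1) = ∅ :=
    sdiff_eq_empty_iff_subset.2 <|
      (toadR_subset_Icc d A P α β t).trans (Icc_subset_Icc_right t.le_succ)
  rw [toadR, toadC_eq_Icc hd]
  simp only [hRold, card_empty, Nat.add_zero, empty_union, Nat.card_Icc, Nat.add_sub_cancel]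

theorem toad_eq_bh_general
    (m : ℕ)
    (P : ℕ → ℝ)
    (α : ℝ)
    (k : ℕ)
    (hk : k = Nat.findGreatest
      (fun j => j ≤ ((Finset.Icc 1 m).filter (fun i => P i ≤ α * j / m)).card) m) :
    toadR (fun _ => m) (fun _ => (1 : ℝ) / m) P α (fun n => (n : ℝ)) m
      = (Finset.Icc 1 m).filter (fun i => P i ≤ α * k / m) := by
  cases m with
  | zero => simp [toadR]
  | succ t =>
    rw [toadR_succ_of_le_deadline _ _ _ _ fun _ => le_rfl, hk]
    simp only [mul_one_div]

/-- TOAD reduces to Benjamini–Hochberg: if all deadlines are `d_i = m`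
(so every hypothesis stays active through stage `m`), `β` is the identity,
and `A_i = 1/m`, then the TOAD rejection set at stage `m` is the BH rejection
set at level `α`: the set `{i : P_i ≤ αk/m}` where
`k = max{j ≤ m : j ≤ #{i : P_i ≤ αj/m}}` (i.e. `k = max{j : P_(j) ≤ αj/m}`). -/
theorem toad_eq_bh
    (m : ℕ) (hm : 0 < m)
    (P : ℕ → ℝ) (hP : ∀ i, 0 < P i)
    (α : ℝ) (hα : α ∈ Set.Ioo (0 : ℝ) 1)
    (k : ℕ)
    (hk : k = Nat.findGreatest
      (fun j => j ≤ ((Finset.Icc 1 m).filter (fun i => P i ≤ α * j / m)).card) m) :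
    toadR (fun _ => m) (fun _ => (1 : ℝ) / m) P α (fun n => (n : ℝ)) m
      = (Finset.Icc 1 m).filter (fun i => P i ≤ α * k / m) :=
  toad_eq_bh_general m P α k hk
end

section
/- TOAD reduces to LOND: if each deadline is immediate (d_i = i, so C_t = {t}) and β is the identity, then TOAD rejects H_t at stage t if and only if P_t ≤ (|R_{t-1}| + 1)·A_t·α, matching the LOND rule. -/
open Finset Classical

lemma toadC_id (t : ℕ) : toadC (fun i => i) (t+1) = {t+1} := by
  ext i
  simp only [toadC, Finset.mem_filter, Finset.mem_Icc, Finset.mem_singleton]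
  omega

lemma toadR_sub (A P : ℕ → ℝ) (α : ℝ) (β : ℕ → ℝ) :
    ∀ t, toadR (fun i => i) A P α β t ⊆ Finset.Icc 1 t := by
  intro t
  induction t with
  | zero => simp [toadR]
  | succ t ih =>
    rw [toadR]
    intro i hi
    simp only [Finset.mem_union] at hi
    rcases hi with h | h
    · have := ih (Finset.mem_sdiff.mp h).1
      simp only [Finset.mem_Icc] at this ⊢
      omega
    · have h2 : i ∈ toadC (fun i => i) (t+1) := Finset.mem_of_mem_filter _ h
      rw [toadC_id] at h2
      simp only [Finset.mem_singleton] at h2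
      simp [h2]

/-- TOAD reduces to LOND: if each deadline is immediate (`d_i = i`, so the
active set at stage `t` is `{t}`) and `β` is the identity, then rejections
are permanent and TOAD rejects `H_{t+1}` at stage `t+1` if and only if
`P_{t+1} ≤ (|R_t| + 1)·A_{t+1}·α`, which is the LOND rule. -/
theorem toad_eq_lond
    (A : ℕ → ℝ) (hA : ∀ i, 0 ≤ A i)
    (P : ℕ → ℝ) (hP : ∀ i, 0 < P i)
    (α : ℝ) (hα : α ∈ Set.Ioo (0 : ℝ) 1) :
    ∀ t : ℕ,
      toadR (fun i => i) A P α (fun n => (n : ℝ)) t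
        ⊆ toadR (fun i => i) A P α (fun n => (n : ℝ)) (t + 1) ∧
      ((t + 1) ∈ toadR (fun i => i) A P α (fun n => (n : ℝ)) (t + 1) ↔
        P (t + 1) ≤ ((toadR (fun i => i) A P α (fun n => (n : ℝ)) t).card + 1)
          * A (t + 1) * α) := by
  intro t
  set R := toadR (fun i => i) A P α (fun n => (n : ℝ)) t with hR
  have hnot : (t+1) ∉ R := by
    intro h
    have := toadR_sub A P α _ t h
    simp only [Finset.mem_Icc] at this
    omega
  have hRold : R \ toadC (fun i => i) (t+1) = R := by
    rw [toadC_id]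
    rw [Finset.sdiff_singleton_eq_erase, Finset.erase_eq_of_notMem hnot]
  have hstep : toadR (fun i => i) A P α (fun n => (n : ℝ)) (t+1) =
      R ∪ ({t+1} : Finset ℕ).filter (fun i => P i ≤ α *
        ((Nat.findGreatest (fun j => j ≤ (({t+1} : Finset ℕ).filter
          (fun i => P i ≤ α * ((j + R.card : ℕ) : ℝ) * A i)).card) 1 + R.card : ℕ) : ℝ) * A i) := by
    have hRold' : R \ ({t+1} : Finset ℕ) = R := by
      rw [Finset.sdiff_singleton_eq_erase, Finset.erase_eq_of_notMem hnot]
    rw [toadR, ← hR, toadC_id, hRold']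
    simp only [Finset.card_singleton]
  set cond := P (t+1) ≤ α * ((1 + R.card : ℕ) : ℝ) * A (t+1) with hcond
  have hfilter1 : (({t+1} : Finset ℕ).filter
      (fun i => P i ≤ α * ((1 + R.card : ℕ) : ℝ) * A i)) = if cond then {t+1} else ∅ := by
    rw [Finset.filter_singleton]
  have hiff : cond ↔ P (t + 1) ≤ ((R.card : ℝ) + 1) * A (t + 1) * α := by
    rw [hcond]
    constructor <;> intro h <;> (push_cast at h ⊢; linarith)
  by_cases hc : cond
  · have hs : Nat.findGreatest (fun j => j ≤ (({t+1} : Finset ℕ).filter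
        (fun i => P i ≤ α * ((j + R.card : ℕ) : ℝ) * A i)).card) 1 = 1 := by
      rw [Nat.findGreatest_succ, if_pos]
      rw [hfilter1, if_pos hc]
      simp
    rw [hstep, hs]
    constructor
    · exact Finset.subset_union_left
    · rw [Finset.mem_union, Finset.filter_singleton, if_pos hc]
      simp only [Finset.mem_singleton]
      constructor
      · intro _; exact hiff.mp hc
      · intro _; right; trivial
  · have hs : Nat.findGreatest (fun j => j ≤ (({t+1} : Finset ℕ).filter
        (fun i => P i ≤ α * ((j + R.card : ℕ) : ℝ) * A i)).card) 1 = 0 := by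
      rw [Nat.findGreatest_succ, if_neg, Nat.findGreatest_zero]
      rw [hfilter1, if_neg hc]
      simp
    have hc0 : ¬ (P (t+1) ≤ α * ((0 + R.card : ℕ) : ℝ) * A (t+1)) := by
      intro h
      apply hc
      rw [hcond]
      have h1 : α * ((0 + R.card : ℕ) : ℝ) ≤ α * ((1 + R.card : ℕ) : ℝ) := by
        apply mul_le_mul_of_nonneg_left _ (le_of_lt hα.1)
        push_cast; linarith
      calc P (t+1) ≤ α * ((0 + R.card : ℕ) : ℝ) * A (t+1) := h
        _ ≤ α * ((1 + R.card : ℕ) : ℝ) * A (t+1) := mul_le_mul_of_nonneg_right h1 (hA _)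
    rw [hstep, hs]
    constructor
    · exact Finset.subset_union_left
    · rw [Finset.mem_union, Finset.filter_singleton, if_neg hc0]
      simp only [Finset.notMem_empty, or_false]
      constructor
      · intro h; exact absurd h hnot
      · intro h; exact absurd (hiff.mpr h) hc
end

section
/- FDR control of BH under super-uniformity and positive dependence: if P_1,...,P_m are p-values such that each null P_i is super-uniform and satisfies the positive-dependence condition P(|R| ≤ r | P_i ≤ u) nondecreasing in u for every r, where R is the BH rejection set at level α, then E[ |H_0 ∩ R| / max(1,|R|) ] ≤ α|H_0|/m ≤ α. -/
open MeasureTheory Finset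

/-- FDR control of Benjamini–Hochberg under super-uniformity and positive
dependence: if each null p-value `P_i` is super-uniform and satisfies the
positive-dependence condition (`P(max(1,|R|) ≤ r | P_i ≤ u)` nondecreasing in
`u` for every `r`), where `R` is the BH rejection set at level `α` (the
largest self-consistent set: `P_j ≤ α|R|/m` for all `j ∈ R`), then
`E[|H₀ ∩ R| / max(1,|R|)] ≤ α|H₀|/m ≤ α`. -/
theorem bh_fdr_control_posdep
    {Ω : Type*} [MeasurableSpace Ω] (μ : Measure Ω) [IsProbabilityMeasure μ]
    (m : ℕ) (hm : 0 < m) (H0 : Finset (Fin m))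
    (α : ℝ) (hα : α ∈ Set.Ioo (0 : ℝ) 1)
    (P : Fin m → Ω → ℝ) (hPmeas : ∀ i, Measurable (P i))
    (hrange : ∀ i ω, P i ω ∈ Set.Icc (0 : ℝ) 1)
    (hsup : ∀ i ∈ H0, ∀ u : ℝ, 0 ≤ u → u ≤ 1 →
      μ {ω | P i ω ≤ u} ≤ ENNReal.ofReal u)
    (R : Ω → Finset (Fin m))
    (hRmeas : ∀ S : Finset (Fin m), MeasurableSet {ω | R ω = S})
    (hsc : ∀ ω, ∀ j ∈ R ω, P j ω ≤ α * (R ω).card / m)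
    (hmax : ∀ ω, ∀ S : Finset (Fin m),
      (∀ j ∈ S, P j ω ≤ α * S.card / m) → S ⊆ R ω)
    (hposdep : ∀ i ∈ H0, ∀ r : ℕ, ∀ u v : ℝ, 0 ≤ u → u ≤ v → v ≤ 1 →
      μ {ω | P i ω ≤ u} ≠ 0 →
      μ ({ω | max 1 (R ω).card ≤ r} ∩ {ω | P i ω ≤ u}) / μ {ω | P i ω ≤ u}
        ≤ μ ({ω | max 1 (R ω).card ≤ r} ∩ {ω | P i ω ≤ v}) / μ {ω | P i ω ≤ v}) :
    (∫ ω, ((H0 ∩ R ω).card : ℝ) / (max 1 (R ω).card : ℝ) ∂μ ≤ α * H0.card / m) ∧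
    α * H0.card / m ≤ α := by

  obtain ⟨hα0, hα1⟩ := hα
  have hmR : (0:ℝ) < m := by exact_mod_cast hm
  have hH0m : (H0.card : ℝ) ≤ m := by
    have := H0.card_le_univ
    simp only [Finset.card_univ, Fintype.card_fin] at this
    exact_mod_cast this
  have hcard_le : ∀ ω, (R ω).card ≤ m := fun ω => by
    simpa using (R ω).card_le_univ
  have hsecond : α * H0.card / m ≤ α := by
    rw [div_le_iff₀ hmR]
    nlinarith
  refine ⟨?_, hsecond⟩
  -- definitions
  set u : ℕ → ℝ := fun r => α * r / m with hu_def
  set Kle : ℕ → Set Ω := fun r => {ω | max 1 (R ω).card ≤ r} with hKle_def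
  set Ple : Fin m → ℕ → Set Ω := fun i r => {ω | P i ω ≤ u r} with hPle_def
  set B : Fin m → ℕ → Set Ω := fun i r => (Kle r \ Kle (r-1)) ∩ Ple i r with hB_def
  have hu_nonneg : ∀ r, 0 ≤ u r := fun r => by
    simp only [hu_def]; positivity
  have hu_mono : ∀ r s : ℕ, r ≤ s → u r ≤ u s := by
    intro r s h
    simp only [hu_def]
    gcongr
  have hu_le_one : ∀ r : ℕ, r ≤ m → u r ≤ 1 := by
    intro r hr
    have : u r ≤ α * m / m := by
      simp only [hu_def]
      gcongr
    rw [mul_div_assoc, div_self (ne_of_gt hmR), mul_one] at this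
    linarith
  have hKle_meas : ∀ r, MeasurableSet (Kle r) := by
    intro r
    have heq : Kle r = ⋃ S ∈ (Finset.univ.filter fun S : Finset (Fin m) => max 1 S.card ≤ r),
        {ω | R ω = S} := by
      ext ω
      simp only [hKle_def, Set.mem_setOf_eq, Set.mem_iUnion, Finset.mem_filter,
        Finset.mem_univ, true_and, exists_prop]
      constructor
      · intro h; exact ⟨R ω, h, rfl⟩
      · rintro ⟨S, hS, hRS⟩; rw [hRS]; exact hS
    rw [heq]
    exact Finset.measurableSet_biUnion _ fun S _ => hRmeas S
  have hPle_meas : ∀ i r, MeasurableSet (Ple i r) := fun i r =>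
    measurableSet_le (hPmeas i) measurable_const
  have hB_meas : ∀ i r, MeasurableSet (B i r) := fun i r =>
    ((hKle_meas r).diff (hKle_meas (r-1))).inter (hPle_meas i r)
  set a : Fin m → ℕ → ℝ := fun i r => (μ (Kle r ∩ Ple i r)).toReal with ha_def
  set b : Fin m → ℕ → ℝ := fun i r => (μ (Kle (r-1) ∩ Ple i r)).toReal with hb_def
  set c : Fin m → ℕ → ℝ := fun i r => (μ (Ple i r)).toReal with hc_def
  set q : Fin m → ℕ → ℝ := fun i r => if c i r = 0 then 0 else a i r / c i r with hq_def
  have hc_nonneg : ∀ i r, 0 ≤ c i r := fun i r => ENNReal.toReal_nonneg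
  have ha_nonneg : ∀ i r, 0 ≤ a i r := fun i r => ENNReal.toReal_nonneg
  have hb_nonneg : ∀ i r, 0 ≤ b i r := fun i r => ENNReal.toReal_nonneg
  have hKle_mono : ∀ r s : ℕ, r ≤ s → Kle r ⊆ Kle s := by
    intro r s h ω hω
    exact le_trans hω h
  have hPle_mono : ∀ i, ∀ r s : ℕ, r ≤ s → Ple i r ⊆ Ple i s := by
    intro i r s h ω hω
    exact le_trans hω (hu_mono r s h)
  have hc_mono : ∀ i, ∀ r s : ℕ, r ≤ s → c i r ≤ c i s := fun i r s h =>
    ENNReal.toReal_mono (measure_ne_top μ _) (measure_mono (hPle_mono i r s h))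
  have hac : ∀ i r, a i r ≤ c i r := fun i r =>
    ENNReal.toReal_mono (measure_ne_top μ _) (measure_mono Set.inter_subset_right)
  have hba : ∀ i r, b i r ≤ a i r := fun i r =>
    ENNReal.toReal_mono (measure_ne_top μ _)
      (measure_mono (Set.inter_subset_inter_left _ (hKle_mono _ _ (Nat.sub_le r 1))))
  have hcu : ∀ i ∈ H0, ∀ r : ℕ, r ≤ m → c i r ≤ u r := by
    intro i hi r hr
    exact ENNReal.toReal_le_of_le_ofReal (hu_nonneg r)
      (hsup i hi (u r) (hu_nonneg r) (hu_le_one r hr))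
  -- q basic facts
  have haq : ∀ i r, a i r = c i r * q i r := by
    intro i r
    simp only [hq_def]
    by_cases hc : c i r = 0
    · simp only [hc, if_pos rfl, mul_zero]
      have := hac i r
      have := ha_nonneg i r
      linarith [hc ▸ this]
    · rw [if_neg hc, mul_div_cancel₀ _ hc]
  have hq_nonneg : ∀ i r, 0 ≤ q i r := by
    intro i r
    simp only [hq_def]
    by_cases hc : c i r = 0
    · simp [hc]
    · rw [if_neg hc]
      exact div_nonneg (ha_nonneg i r) (hc_nonneg i r)
  have hq_le_one : ∀ i r, q i r ≤ 1 := by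
    intro i r
    simp only [hq_def]
    by_cases hc : c i r = 0
    · simp [hc]
    · rw [if_neg hc]
      exact div_le_one_of_le₀ (hac i r) (hc_nonneg i r)
  -- split lemma
  have hsplit : ∀ i, ∀ r : ℕ, (μ (B i r)).toReal = a i r - b i r := by
    intro i r
    have hdisj : Disjoint (B i r) (Kle (r-1) ∩ Ple i r) := by
      refine Set.disjoint_left.mpr ?_
      rintro ω ⟨⟨_, hω2⟩, _⟩ ⟨hω3, _⟩
      exact hω2 hω3
    have hset : Kle r ∩ Ple i r = B i r ∪ (Kle (r-1) ∩ Ple i r) := by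
      ext ω
      simp only [hB_def, Set.mem_inter_iff, Set.mem_union, Set.mem_diff]
      have hsub := @hKle_mono (r-1) r (Nat.sub_le r 1) ω
      tauto
    have hm2 : μ (Kle r ∩ Ple i r) = μ (B i r) + μ (Kle (r-1) ∩ Ple i r) := by
      rw [hset]
      exact measure_union hdisj ((hKle_meas (r-1)).inter (hPle_meas i r))
    have : a i r = (μ (B i r)).toReal + b i r := by
      simp only [ha_def, hb_def, hm2]
      exact ENNReal.toReal_add (measure_ne_top μ _) (measure_ne_top μ _)
    linarith
  -- positive dependence: b i r ≥ c i r * q i (r-1)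
  have hb_ge : ∀ i ∈ H0, ∀ r : ℕ, 1 ≤ r → r ≤ m → c i r * q i (r-1) ≤ b i r := by
    intro i hi r hr1 hrm
    by_cases hc : c i r = 0
    · have hb0 : b i r ≤ c i r :=
        ENNReal.toReal_mono (measure_ne_top μ _) (measure_mono Set.inter_subset_right)
      rw [hc, zero_mul]
      exact hb_nonneg i r
    by_cases hc' : c i (r-1) = 0
    · have hq0 : q i (r-1) = 0 := by simp [hq_def, hc']
      rw [hq0, mul_zero]
      exact hb_nonneg i r
    · have hμne : μ (Ple i (r-1)) ≠ 0 := by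
        intro h
        apply hc'
        simp only [hc_def, h, ENNReal.toReal_zero]
      have hpd := hposdep i hi (r-1) (u (r-1)) (u r) (hu_nonneg _)
        (hu_mono _ _ (Nat.sub_le r 1)) (hu_le_one r hrm) hμne
      have hμne' : μ (Ple i r) ≠ 0 := by
        intro h
        apply hc
        simp only [hc_def, h, ENNReal.toReal_zero]
      have hfin : μ (Kle (r-1) ∩ Ple i r) / μ (Ple i r) ≠ ⊤ :=
        (ENNReal.div_lt_top (measure_ne_top μ _) hμne').ne
      have hreal := ENNReal.toReal_mono hfin hpd
      rw [ENNReal.toReal_div, ENNReal.toReal_div] at hreal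
      -- hreal : a i (r-1) / c i (r-1) ≤ b i r / c i r
      have hcpos : 0 < c i r := lt_of_le_of_ne (hc_nonneg i r) (Ne.symm hc)
      have hq' : q i (r-1) = a i (r-1) / c i (r-1) := by
        simp only [hq_def, if_neg hc']
      rw [hq', mul_comm, ← le_div_iff₀ hcpos]
      exact hreal
  -- monotonicity of q
  have hq_mono : ∀ i ∈ H0, ∀ r : ℕ, 1 ≤ r → r ≤ m → q i (r-1) ≤ q i r := by
    intro i hi r hr1 hrm
    by_cases hc : c i r = 0
    · have hc' : c i (r-1) = 0 :=
        le_antisymm (hc ▸ hc_mono i (r-1) r (Nat.sub_le r 1)) (hc_nonneg i (r-1))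
      simp [hq_def, hc, hc']
    · have hcpos : 0 < c i r := lt_of_le_of_ne (hc_nonneg i r) (Ne.symm hc)
      have h1 : c i r * q i (r-1) ≤ b i r := hb_ge i hi r hr1 hrm
      have h2 : b i r ≤ a i r := hba i r
      have : c i r * q i (r-1) ≤ c i r * q i r := by
        rw [← haq i r]; linarith
      exact le_of_mul_le_mul_left (by linarith) hcpos
  -- per-term bound
  have hterm : ∀ i ∈ H0, ∀ r ∈ Finset.Icc 1 m,
      (1/(r:ℝ)) * (μ (B i r)).toReal ≤ (α/m) * (q i r - q i (r-1)) := by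
    intro i hi r hr
    rw [Finset.mem_Icc] at hr
    obtain ⟨hr1, hrm⟩ := hr
    have hrpos : (0:ℝ) < r := by exact_mod_cast hr1
    rw [hsplit i r]
    have hΔ : 0 ≤ q i r - q i (r-1) := by linarith [hq_mono i hi r hr1 hrm]
    have h1 : a i r - b i r ≤ c i r * (q i r - q i (r-1)) := by
      have := hb_ge i hi r hr1 hrm
      have := haq i r
      nlinarith
    have h2 : (1/(r:ℝ)) * (a i r - b i r) ≤ (1/(r:ℝ)) * (c i r * (q i r - q i (r-1)))
      := mul_le_mul_of_nonneg_left h1 (by positivity)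
    refine le_trans h2 ?_
    have hcur : c i r ≤ α * r / m := hcu i hi r hrm
    have h3 : (1/(r:ℝ)) * c i r ≤ α / m := by
      rw [div_mul_eq_mul_div, one_mul, div_le_div_iff₀ hrpos hmR] at *
      calc c i r * m ≤ (α * r / m) * m := by nlinarith [hc_nonneg i r]
        _ = α * r := by field_simp
    calc (1/(r:ℝ)) * (c i r * (q i r - q i (r-1)))
        = ((1/(r:ℝ)) * c i r) * (q i r - q i (r-1)) := by ring
      _ ≤ (α/m) * (q i r - q i (r-1)) := mul_le_mul_of_nonneg_right h3 hΔ
  -- telescoping and per-i key bound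
  have hkey : ∀ i ∈ H0, ∑ r ∈ Finset.Icc 1 m, (1/(r:ℝ)) * (μ (B i r)).toReal ≤ α / m := by
    intro i hi
    have h1 : ∑ r ∈ Finset.Icc 1 m, (1/(r:ℝ)) * (μ (B i r)).toReal
        ≤ ∑ r ∈ Finset.Icc 1 m, (α/m) * (q i r - q i (r-1)) :=
      Finset.sum_le_sum (hterm i hi)
    have htel : ∑ r ∈ Finset.Icc 1 m, (q i r - q i (r-1)) = q i m - q i 0 := by
      have : Finset.Icc 1 m = Finset.Ico 1 (m+1) := by
        rw [Finset.Ico_add_one_right_eq_Icc]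
      rw [this, Finset.sum_Ico_eq_sum_range]
      simp only [Nat.add_sub_cancel]
      have : ∀ k : ℕ, q i (1 + k) - q i (1 + k - 1) = q i (k+1) - q i k := by
        intro k
        congr 2 <;> omega
      rw [Finset.sum_congr rfl fun k _ => this k]
      exact Finset.sum_range_sub (q i) m
    have h2 : ∑ r ∈ Finset.Icc 1 m, (α/m) * (q i r - q i (r-1))
        = (α/m) * (q i m - q i 0) := by
      rw [← Finset.mul_sum, htel]
    have h3 : (α/m) * (q i m - q i 0) ≤ α/m := by
      have hαm : 0 ≤ α/m := by positivity
      nlinarith [hq_le_one i m, hq_nonneg i 0]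
    linarith
  -- integral machinery
  set cS : Finset (Fin m) → ℝ := fun S => ((H0 ∩ S).card : ℝ) / (max 1 (S.card : ℝ)) with hcS_def
  set F : Ω → ℝ := fun ω => ((H0 ∩ R ω).card : ℝ) / (max 1 ((R ω).card : ℝ)) with hF_def
  set G : Ω → ℝ := fun ω => ∑ i ∈ H0, ∑ r ∈ Finset.Icc 1 m,
    (B i r).indicator (fun _ => 1/(r:ℝ)) ω with hG_def
  have hF_eq : F = fun ω => ∑ S : Finset (Fin m),
      ({ω' | R ω' = S}).indicator (fun _ => cS S) ω := by
    funext ω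
    rw [Finset.sum_eq_single (R ω)]
    · simp only [hF_def, hcS_def]
      rw [Set.indicator_of_mem (by exact rfl)]
    · intro S _ hS
      exact Set.indicator_of_notMem (fun h => hS (by exact h.symm ▸ rfl)) _
    · intro h; exact absurd (Finset.mem_univ _) h
  have hF_int : Integrable F μ := by
    rw [hF_eq]
    exact integrable_finset_sum _ fun S _ => (integrable_const (cS S)).indicator (hRmeas S)
  have hG_int_inner : ∀ i r, Integrable ((B i r).indicator (fun _ => 1/(r:ℝ))) μ :=
    fun i r => (integrable_const _).indicator (hB_meas i r)
  have hG_int : Integrable G μ := by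
    rw [hG_def]
    exact integrable_finset_sum _ fun i _ =>
      integrable_finset_sum _ fun r _ => hG_int_inner i r
  have hFG : ∀ ω, F ω ≤ G ω := by
    intro ω
    have hcardsum : ((H0 ∩ R ω).card : ℝ) = ∑ i ∈ H0, if i ∈ R ω then (1:ℝ) else 0 := by
      rw [Finset.sum_boole, Finset.filter_mem_eq_inter]
    have hFsum : F ω = ∑ i ∈ H0, (if i ∈ R ω then (1:ℝ) else 0) / (max 1 ((R ω).card : ℝ)) := by
      rw [hF_def]
      simp only
      rw [hcardsum, Finset.sum_div]
    rw [hFsum, hG_def]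
    refine Finset.sum_le_sum fun i hi => ?_
    by_cases hiR : i ∈ R ω
    · have hk1 : 1 ≤ (R ω).card := Finset.card_pos.mpr ⟨i, hiR⟩
      have hkm := hcard_le ω
      have hKeqN : max 1 (R ω).card = (R ω).card := max_eq_right hk1
      have hKeqR : max 1 ((R ω).card : ℝ) = ((R ω).card : ℝ) :=
        max_eq_right (by exact_mod_cast hk1)
      have hmem : ω ∈ B i (R ω).card := by
        refine ⟨⟨?_, ?_⟩, ?_⟩
        · show max 1 (R ω).card ≤ (R ω).card
          omega
        · show ¬ (max 1 (R ω).card ≤ (R ω).card - 1)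
          omega
        · show P i ω ≤ u (R ω).card
          simpa only [hu_def] using hsc ω i hiR
      have hle := Finset.single_le_sum
        (f := fun r => (B i r).indicator (fun _ => 1/(r:ℝ)) ω)
        (fun r _ => Set.indicator_nonneg (fun _ _ => by positivity) ω)
        (Finset.mem_Icc.mpr ⟨hk1, hkm⟩)
      simp only [Set.indicator_of_mem hmem] at hle
      rw [if_pos hiR, hKeqR]
      simpa using hle
    · rw [if_neg hiR, zero_div]
      exact Finset.sum_nonneg fun r _ => Set.indicator_nonneg (fun _ _ => by positivity) ω
  have hGint_eq : ∫ ω, G ω ∂μ = ∑ i ∈ H0, ∑ r ∈ Finset.Icc 1 m,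
      (μ (B i r)).toReal * (1/(r:ℝ)) := by
    rw [hG_def]
    rw [integral_finset_sum _ fun i _ => integrable_finset_sum _ fun r _ => hG_int_inner i r]
    refine Finset.sum_congr rfl fun i _ => ?_
    rw [integral_finset_sum _ fun r _ => hG_int_inner i r]
    refine Finset.sum_congr rfl fun r _ => ?_
    rw [integral_indicator_const _ (hB_meas i r)]
    simp [smul_eq_mul]
    exact Or.inl rfl
  calc ∫ ω, ((H0 ∩ R ω).card : ℝ) / (max 1 ((R ω).card : ℝ)) ∂μ
      = ∫ ω, F ω ∂μ := rfl
    _ ≤ ∫ ω, G ω ∂μ := integral_mono hF_int hG_int hFG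
    _ = ∑ i ∈ H0, ∑ r ∈ Finset.Icc 1 m, (μ (B i r)).toReal * (1/(r:ℝ)) := hGint_eq
    _ ≤ ∑ i ∈ H0, (α/m) := by
        refine Finset.sum_le_sum fun i hi => ?_
        have := hkey i hi
        calc ∑ r ∈ Finset.Icc 1 m, (μ (B i r)).toReal * (1/(r:ℝ))
            = ∑ r ∈ Finset.Icc 1 m, (1/(r:ℝ)) * (μ (B i r)).toReal := by
              refine Finset.sum_congr rfl fun r _ => mul_comm _ _
          _ ≤ α/m := this
    _ = α * H0.card / m := by
        rw [Finset.sum_const, nsmul_eq_mul]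
        ring
end

section
/- FDR control of reshaped BH under arbitrary dependence: if each null p-value P_i is super-uniform (marginally), and R is the largest subset of {1,...,m} such that P_j ≤ α·β(|R|)/m for all j ∈ R, where β is a shape function, then E[ |H_0 ∩ R| / max(1,|R|) ] ≤ α|H_0|/m ≤ α, with no assumption on the joint dependence of the p-values. -/
open MeasureTheory Finset

private lemma bh_tele (m : ℕ) : ∀ j k : ℕ, 1 ≤ k → k ≤ m → m - k = j →
    ∑ r ∈ Icc k m, (if r = m then (1:ℝ)/m else 1/(r:ℝ) - 1/((r:ℝ)+1)) = 1/(k:ℝ) := by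
  intro j
  induction j with
  | zero =>
    intro k hk1 hkm hj
    have hk : k = m := by omega
    subst hk
    simp
  | succ n ih =>
    intro k hk1 hkm hj
    have hkm' : k < m := by omega
    have hsplit : Icc k m = insert k (Icc (k+1) m) := by
      ext x; simp only [mem_Icc, mem_insert]; omega
    rw [hsplit, Finset.sum_insert (by simp only [mem_Icc]; omega),
      ih (k+1) (by omega) (by omega) (by omega), if_neg (by omega : k ≠ m)]
    have hk0 : (0:ℝ) < k := by exact_mod_cast hk1
    push_cast
    ring

/-- FDR control of reshaped BH under arbitrary dependence: if each null
p-value `P_i` is (marginally) super-uniform, `β` is a shape function arising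
from a distribution `ν` on the positive reals, and `R` is the largest subset
of `{1,…,m}` with `P_j ≤ α·β(|R|)/m` for all `j ∈ R`, then
`E[|H₀ ∩ R| / max(1,|R|)] ≤ α|H₀|/m ≤ α`, with no assumption on the joint
dependence of the p-values. -/
theorem reshaped_bh_fdr_control
    {Ω : Type*} [MeasurableSpace Ω] (μ : Measure Ω) [IsProbabilityMeasure μ]
    (ν : Measure ℝ) [IsProbabilityMeasure ν]
    (hνpos : ν (Set.Iic 0) = 0) (hνint : Integrable id ν)
    (β : ℕ → ℝ) (hβ : ∀ r : ℕ, β r = ∫ x, (if x ≤ (r : ℝ) then x else 0) ∂ν)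
    (m : ℕ) (hm : 0 < m) (H0 : Finset (Fin m))
    (α : ℝ) (hα : α ∈ Set.Ioo (0 : ℝ) 1)
    (P : Fin m → Ω → ℝ) (hPmeas : ∀ i, Measurable (P i))
    (hrange : ∀ i ω, P i ω ∈ Set.Icc (0 : ℝ) 1)
    (hsup : ∀ i ∈ H0, ∀ u : ℝ, 0 ≤ u → u ≤ 1 →
      μ {ω | P i ω ≤ u} ≤ ENNReal.ofReal u)
    (R : Ω → Finset (Fin m))
    (hRmeas : ∀ S : Finset (Fin m), MeasurableSet {ω | R ω = S})
    (hsc : ∀ ω, ∀ j ∈ R ω, P j ω ≤ α * β (R ω).card / m)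
    (hmax : ∀ ω, ∀ S : Finset (Fin m),
      (∀ j ∈ S, P j ω ≤ α * β S.card / m) → S ⊆ R ω) :
    (∫ ω, ((H0 ∩ R ω).card : ℝ) / (max 1 (R ω).card : ℝ) ∂μ ≤ α * H0.card / m) ∧
    α * H0.card / m ≤ α := by
  obtain ⟨hα0, hα1⟩ := hα
  have hm' : (0:ℝ) < m := by exact_mod_cast hm
  set D : ℕ → ℝ := fun r => if r = m then (1:ℝ)/m else 1/(r:ℝ) - 1/((r:ℝ)+1) with hD
  have hTel : ∀ k : ℕ, 1 ≤ k → k ≤ m → ∑ r ∈ Icc k m, D r = 1/(k:ℝ) := by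
    intro k hk1 hkm
    exact bh_tele m (m - k) k hk1 hkm rfl
  have hDnn : ∀ r : ℕ, 1 ≤ r → 0 ≤ D r := by
    intro r hr
    simp only [hD]
    split
    · positivity
    · have h1 : (0:ℝ) < r := by exact_mod_cast hr
      have h2 : (1:ℝ)/((r:ℝ)+1) ≤ 1/(r:ℝ) := by
        apply one_div_le_one_div_of_le h1; linarith
      linarith
  -- a.e. positivity of ν
  have hae : ∀ᵐ x ∂ν, 0 < x := by
    have h := (MeasureTheory.measure_eq_zero_iff_ae_notMem.mp hνpos)
    filter_upwards [h] with x hx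
    simpa [Set.mem_Iic, not_le] using hx
  -- integrability of the truncated identity
  have hfmeas : ∀ r : ℕ, Measurable fun x : ℝ => if x ≤ (r:ℝ) then x else 0 :=
    fun r => Measurable.ite measurableSet_Iic measurable_id measurable_const
  have hfint : ∀ r : ℕ, Integrable (fun x : ℝ => if x ≤ (r:ℝ) then x else 0) ν := by
    intro r
    refine hνint.mono (hfmeas r).aestronglyMeasurable (ae_of_all _ ?_)
    intro x
    by_cases h : x ≤ (r:ℝ) <;> simp [h, id]
  -- β is monotone and nonnegative
  have hβmono : ∀ r s : ℕ, r ≤ s → β r ≤ β s := by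
    intro r s hrs
    rw [hβ r, hβ s]
    apply integral_mono_ae (hfint r) (hfint s)
    filter_upwards [hae] with x hx
    by_cases h1 : x ≤ (r:ℝ)
    · have h2 : x ≤ (s:ℝ) := le_trans h1 (by exact_mod_cast hrs)
      simp [h1, h2]
    · by_cases h2 : x ≤ (s:ℝ) <;> simp [h1, h2] <;> linarith
  have hβnn : ∀ r : ℕ, 0 ≤ β r := by
    intro r
    rw [hβ r]
    apply integral_nonneg_of_ae
    filter_upwards [hae] with x hx
    by_cases h : x ≤ (r:ℝ) <;> simp [h] <;> linarith
  -- key ν-side bound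
  have hsum_le : ∑ r ∈ Icc 1 m, D r * β r ≤ 1 := by
    have h1 : ∑ r ∈ Icc 1 m, D r * β r
        = ∫ x, (∑ r ∈ Icc 1 m, D r * if x ≤ (r:ℝ) then x else 0) ∂ν := by
      rw [integral_finset_sum _ (fun r _ => (hfint r).const_mul _)]
      refine Finset.sum_congr rfl fun r _ => ?_
      rw [hβ r, ← integral_const_mul]
    have hpt : ∀ x : ℝ, (∑ r ∈ Icc 1 m, D r * if x ≤ (r:ℝ) then x else 0) ≤ 1 := by
      intro x
      by_cases hx : 0 < x
      · by_cases hxm : x ≤ (m:ℝ)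
        · set k := max 1 ⌈x⌉₊ with hk
          have hk1 : 1 ≤ k := le_max_left _ _
          have hceil : ⌈x⌉₊ ≤ m := Nat.ceil_le.mpr hxm
          have hkm : k ≤ m := by omega
          have hxk : x ≤ (k:ℝ) := by
            refine le_trans (Nat.le_ceil x) ?_
            exact_mod_cast le_max_right 1 ⌈x⌉₊
          have hsum_eq : (∑ r ∈ Icc 1 m, D r * if x ≤ (r:ℝ) then x else 0)
              = ∑ r ∈ Icc k m, D r * x := by
            rw [← Finset.sum_subset (Finset.Icc_subset_Icc_left hk1) ?_]
            · refine Finset.sum_congr rfl fun r hr => ?_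
              simp only [mem_Icc] at hr
              have hxr : x ≤ (r:ℝ) := le_trans hxk (by exact_mod_cast hr.1)
              simp [hxr]
            · intro r hr hnr
              simp only [mem_Icc] at hr hnr
              have hrk : r < k := by omega
              have hnxr : ¬ x ≤ (r:ℝ) := by
                intro hle
                have := Nat.ceil_le.mpr hle
                omega
              simp [hnxr]
          rw [hsum_eq, ← Finset.sum_mul, hTel k hk1 hkm]
          have hk0 : (0:ℝ) < k := by exact_mod_cast hk1
          rw [div_mul_eq_mul_div, one_mul, div_le_one hk0]
          exact hxk
        · have : ∀ r ∈ Icc 1 m, D r * (if x ≤ (r:ℝ) then x else 0) = 0 := by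
            intro r hr
            simp only [mem_Icc] at hr
            have : ¬ x ≤ (r:ℝ) := by
              push_neg
              refine lt_of_le_of_lt ?_ (not_le.mp hxm)
              exact_mod_cast hr.2
            simp [this]
          rw [Finset.sum_congr rfl this]
          simp
      · refine le_trans (Finset.sum_nonpos fun r hr => ?_) zero_le_one
        simp only [mem_Icc] at hr
        have hDr := hDnn r hr.1
        have hite : (if x ≤ (r:ℝ) then x else 0) ≤ 0 := by
          split
          · linarith
          · exact le_refl 0
        exact mul_nonpos_of_nonneg_of_nonpos hDr hite
      
    rw [h1]
    calc ∫ x, (∑ r ∈ Icc 1 m, D r * if x ≤ (r:ℝ) then x else 0) ∂ν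
        ≤ ∫ _x, (1:ℝ) ∂ν := by
          apply integral_mono
            (integrable_finset_sum _ fun r _ => (hfint r).const_mul _)
            (integrable_const 1) hpt
      _ = 1 := by simp
  -- super-uniformity in real form
  have hsup' : ∀ i ∈ H0, ∀ u : ℝ, 0 ≤ u → (μ {ω | P i ω ≤ u}).toReal ≤ u := by
    intro i hi u hu
    by_cases h1 : u ≤ 1
    · calc (μ {ω | P i ω ≤ u}).toReal
          ≤ (ENNReal.ofReal u).toReal :=
            ENNReal.toReal_mono ENNReal.ofReal_ne_top (hsup i hi u hu h1)
        _ = u := ENNReal.toReal_ofReal hu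
    · calc (μ {ω | P i ω ≤ u}).toReal
          ≤ (μ Set.univ).toReal :=
            ENNReal.toReal_mono (measure_ne_top μ _) (measure_mono (Set.subset_univ _))
        _ = 1 := by simp
        _ ≤ u := by linarith
  have hsmeas : ∀ (i : Fin m) (r : ℕ), MeasurableSet {ω | P i ω ≤ α * β r / m} :=
    fun i r => measurableSet_le (hPmeas i) measurable_const
  -- the dominating function g
  set g : Ω → ℝ := fun ω => ∑ i ∈ H0, ∑ r ∈ Icc 1 m,
      Set.indicator {ω' | P i ω' ≤ α * β r / m} (fun _ => D r) ω with hg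
  have hgint : Integrable g μ := by
    refine integrable_finset_sum _ fun i _ => integrable_finset_sum _ fun r _ => ?_
    exact (integrable_const (D r)).indicator (hsmeas i r)
  -- pointwise bound: FDP ≤ g
  have hfg : ∀ ω, ((H0 ∩ R ω).card : ℝ) / (max 1 (R ω).card : ℝ) ≤ g ω := by
    intro ω
    have hcard : ((H0 ∩ R ω).card : ℝ) = ∑ i ∈ H0, if i ∈ R ω then (1:ℝ) else 0 := by
      rw [Finset.sum_ite_mem, Finset.sum_const]
      simp
    rw [hcard, Finset.sum_div]
    refine Finset.sum_le_sum fun i hi => ?_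
    by_cases hiR : i ∈ R ω
    · have hk1 : 1 ≤ (R ω).card := Finset.card_pos.mpr ⟨i, hiR⟩
      have hkm : (R ω).card ≤ m := by
        calc (R ω).card ≤ (Finset.univ : Finset (Fin m)).card := Finset.card_le_univ _
          _ = m := by simp
      have hk1' : (1:ℝ) ≤ ((R ω).card : ℝ) := by exact_mod_cast hk1
      have hmax1 : max (1:ℝ) (((R ω).card : ℕ) : ℝ) = (((R ω).card : ℕ) : ℝ) :=
        max_eq_right hk1'
      rw [if_pos hiR, hmax1]
      calc (1:ℝ) / ((R ω).card : ℝ) = ∑ r ∈ Icc (R ω).card m, D r :=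
            (hTel (R ω).card hk1 hkm).symm
        _ = ∑ r ∈ Icc (R ω).card m,
              Set.indicator {ω' | P i ω' ≤ α * β r / m} (fun _ => D r) ω := by
            refine Finset.sum_congr rfl fun r hr => ?_
            simp only [mem_Icc] at hr
            have hPle : P i ω ≤ α * β r / m := by
              refine le_trans (hsc ω i hiR) ?_
              gcongr
              exact hβmono _ _ hr.1
            exact (Set.indicator_of_mem
              (show ω ∈ {ω' | P i ω' ≤ α * β r / (m:ℝ)} from hPle) (fun _ => D r)).symm
        _ ≤ ∑ r ∈ Icc 1 m,
              Set.indicator {ω' | P i ω' ≤ α * β r / m} (fun _ => D r) ω := by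
            refine Finset.sum_le_sum_of_subset_of_nonneg
              (Finset.Icc_subset_Icc_left hk1) fun r hr _ => ?_
            simp only [mem_Icc] at hr
            exact Set.indicator_nonneg (fun _ _ => hDnn r hr.1) ω
    · rw [if_neg hiR]
      rw [zero_div]
      refine Finset.sum_nonneg fun r hr => ?_
      simp only [mem_Icc] at hr
      exact Set.indicator_nonneg (fun _ _ => hDnn r hr.1) ω
  have hfnn : ∀ ω, 0 ≤ ((H0 ∩ R ω).card : ℝ) / (max 1 (R ω).card : ℝ) := by
    intro ω
    exact div_nonneg (Nat.cast_nonneg _) (le_trans zero_le_one (le_max_left _ _))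
  -- integral of g
  have hgval : ∫ ω, g ω ∂μ ≤ α * H0.card / m := by
    have h1 : ∫ ω, g ω ∂μ = ∑ i ∈ H0, ∑ r ∈ Icc 1 m,
        (μ {ω' | P i ω' ≤ α * β r / m}).toReal * D r := by
      rw [hg, integral_finset_sum _ (fun i _ =>
        integrable_finset_sum _ fun r _ => (integrable_const (D r)).indicator (hsmeas i r))]
      refine Finset.sum_congr rfl fun i _ => ?_
      rw [integral_finset_sum _ (fun r _ => (integrable_const (D r)).indicator (hsmeas i r))]
      refine Finset.sum_congr rfl fun r _ => ?_
      rw [integral_indicator_const _ (hsmeas i r)]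
      simp [mul_comm, measureReal_def]
    rw [h1]
    have h2 : ∀ i ∈ H0, ∑ r ∈ Icc 1 m,
        (μ {ω' | P i ω' ≤ α * β r / m}).toReal * D r ≤ α / m := by
      intro i hi
      calc ∑ r ∈ Icc 1 m, (μ {ω' | P i ω' ≤ α * β r / m}).toReal * D r
          ≤ ∑ r ∈ Icc 1 m, (α * β r / m) * D r := by
            refine Finset.sum_le_sum fun r hr => ?_
            simp only [mem_Icc] at hr
            refine mul_le_mul_of_nonneg_right ?_ (hDnn r hr.1)
            exact hsup' i hi _ (div_nonneg (mul_nonneg hα0.le (hβnn r)) hm'.le)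
        _ = (α / m) * ∑ r ∈ Icc 1 m, D r * β r := by
            rw [Finset.mul_sum]
            refine Finset.sum_congr rfl fun r _ => ?_
            ring
        _ ≤ (α / m) * 1 := by
            refine mul_le_mul_of_nonneg_left hsum_le ?_
            positivity
        _ = α / m := mul_one _
    calc ∑ i ∈ H0, ∑ r ∈ Icc 1 m, (μ {ω' | P i ω' ≤ α * β r / m}).toReal * D r
        ≤ ∑ _i ∈ H0, α / m := Finset.sum_le_sum h2
      _ = H0.card * (α / m) := by rw [Finset.sum_const]; ring
      _ = α * H0.card / m := by ring
  constructor
  · calc ∫ ω, ((H0 ∩ R ω).card : ℝ) / (max 1 (R ω).card : ℝ) ∂μ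
        ≤ ∫ ω, g ω ∂μ :=
          integral_mono_of_nonneg (ae_of_all _ hfnn) hgint (ae_of_all _ hfg)
      _ ≤ α * H0.card / m := hgval
  · have hH0 : (H0.card : ℝ) ≤ m := by
      have : H0.card ≤ m := by
        calc H0.card ≤ (Finset.univ : Finset (Fin m)).card := Finset.card_le_univ _
          _ = m := by simp
      exact_mod_cast this
    calc α * H0.card / m ≤ α * m / m := by gcongr
      _ = α := by field_simp
end

section
/- Per-null-hypothesis bound under general dependence: if P is super-uniform, A ≥ 0 is a constant, β is a shape function, and R ≥ 1 is any positive-integer-valued random variable, then E[ 1(P ≤ αβ(R)A) / R ] ≤ αA. Consequently, summing over nulls with ∑_i A_i ≤ 1 yields FDR(t) ≤ α for TOAD with a shape function. -/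
/-!
Since `1/n = ∑_{k ≥ n} (1/k - 1/(k+1))` and the threshold `β` is nondecreasing,
`1(P ≤ c β(R)) / R ≤ ∑_k (1/k - 1/(k+1)) 1(P ≤ c β(k))` holds pointwise, whatever the joint
law of `P` and `R`. Taking expectations and using super-uniformity bounds the left side by
`c ∑_k (1/k - 1/(k+1)) β(k) = c E_ν[X ∑_{k ≥ X} (1/k - 1/(k+1))] = c E_ν[X / ⌈X⌉] ≤ c`.
-/

open MeasureTheory Filter Topology
open scoped ENNReal

-- the weight `1/k - 1/(k+1)` of the header, at index `k + 1`
noncomputable def tailWeight (k : ℕ) : ℝ := ((k : ℝ) + 1)⁻¹ - ((k : ℝ) + 2)⁻¹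

lemma tailWeight_nonneg (k : ℕ) : 0 ≤ tailWeight k :=
  sub_nonneg.2 <| inv_anti₀ (by positivity) (by linarith)

lemma hasSum_sub_succ_of_antitone {f : ℕ → ℝ} (hf : Antitone f)
    (hlim : Tendsto f atTop (𝓝 0)) : HasSum (fun k ↦ f k - f (k + 1)) (f 0) := by
  rw [hasSum_iff_tendsto_nat_of_nonneg fun k ↦ sub_nonneg.2 (hf k.le_succ)]
  simp_rw [Finset.sum_range_sub']
  simpa using tendsto_const_nhds.sub hlim

lemma hasSum_ite_tailWeight {n : ℕ} (hn : 1 ≤ n) :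
    HasSum (fun k ↦ if n ≤ k + 1 then tailWeight k else 0) (n : ℝ)⁻¹ := by
  have hf : Antitone fun k : ℕ ↦ ((max n (k + 1) : ℕ) : ℝ)⁻¹ := fun j k hjk ↦
    inv_anti₀ (by positivity) (by gcongr)
  have hlim : Tendsto (fun k : ℕ ↦ ((max n (k + 1) : ℕ) : ℝ)⁻¹) atTop (𝓝 0) :=
    tendsto_inv_atTop_zero.comp <| tendsto_natCast_atTop_atTop.comp <|
      tendsto_atTop_mono (fun k ↦ le_max_right n (k + 1)) (tendsto_add_atTop_nat 1)
  convert hasSum_sub_succ_of_antitone hf hlim using 1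
  · ext k
    by_cases h : n ≤ k + 1
    · simp [h, tailWeight, max_eq_right (h.trans k.succ.le_succ)]
      ring
    · simp [h, max_eq_left (by omega : k + 1 ≤ n), max_eq_left (by omega : k + 1 + 1 ≤ n)]
  · simp [max_eq_left hn]

lemma tsum_ite_ofReal_tailWeight {n : ℕ} (hn : 1 ≤ n) :
    ∑' k, (if n ≤ k + 1 then ENNReal.ofReal (tailWeight k) else 0) = (n : ℝ≥0∞)⁻¹ := by
  have hsum := hasSum_ite_tailWeight hn
  have hnn : ∀ k, 0 ≤ if n ≤ k + 1 then tailWeight k else 0 := fun k ↦ by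
    split_ifs
    exacts [tailWeight_nonneg k, le_rfl]
  rw [← ENNReal.ofReal_natCast, ← ENNReal.ofReal_inv_of_pos (by positivity), ← hsum.tsum_eq,
    ENNReal.ofReal_tsum_of_nonneg hnn hsum.summable]
  exact tsum_congr fun k ↦ by split_ifs <;> simp

section Dependence

variable {Ω : Type*} {P : Ω → ℝ} {R : Ω → ℕ} {b : ℕ → ℝ}

lemma indicator_inv_le_tsum_indicator (hb : Monotone b) (hR : ∀ ω, 1 ≤ R ω) (ω : Ω) :
    {ω | P ω ≤ b (R ω)}.indicator (fun ω ↦ (R ω : ℝ≥0∞)⁻¹) ω ≤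
      ∑' k, {ω | P ω ≤ b (k + 1)}.indicator (fun _ ↦ ENNReal.ofReal (tailWeight k)) ω := by
  by_cases hω : P ω ≤ b (R ω)
  · rw [Set.indicator_of_mem (s := {ω | P ω ≤ b (R ω)}) hω, ← tsum_ite_ofReal_tailWeight (hR ω)]
    refine ENNReal.tsum_le_tsum fun k ↦ ?_
    split_ifs with hk
    · rw [Set.indicator_of_mem (s := {ω | P ω ≤ b (k + 1)}) (hω.trans (hb hk))]
    · exact zero_le
  · rw [Set.indicator_of_notMem (s := {ω | P ω ≤ b (R ω)}) hω]
    exact zero_le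

variable [MeasurableSpace Ω] {μ : Measure Ω}

lemma lintegral_indicator_inv_le (hP : Measurable P) (hb : Monotone b) (hR : ∀ ω, 1 ≤ R ω) :
    ∫⁻ ω, {ω | P ω ≤ b (R ω)}.indicator (fun ω ↦ (R ω : ℝ≥0∞)⁻¹) ω ∂μ ≤
      ∑' k, ENNReal.ofReal (tailWeight k) * μ {ω | P ω ≤ b (k + 1)} := by
  have hmeas (k : ℕ) : MeasurableSet {ω | P ω ≤ b (k + 1)} := hP measurableSet_Iic
  calc _ ≤ ∫⁻ ω, ∑' k,
          {ω | P ω ≤ b (k + 1)}.indicator (fun _ ↦ ENNReal.ofReal (tailWeight k)) ω ∂μ :=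
        lintegral_mono (indicator_inv_le_tsum_indicator hb hR)
    _ = _ := by
      rw [lintegral_tsum fun k ↦ (measurable_const.indicator (hmeas k)).aemeasurable]
      exact tsum_congr fun k ↦ lintegral_indicator_const (hmeas k) _

lemma measure_le_ofReal_of_superuniform [IsProbabilityMeasure μ]
    (hsup : ∀ u : ℝ, 0 ≤ u → u ≤ 1 → μ {ω | P ω ≤ u} ≤ ENNReal.ofReal u) {u : ℝ} (hu : 0 ≤ u) :
    μ {ω | P ω ≤ u} ≤ ENNReal.ofReal u := by
  rcases le_total u 1 with h | h
  · exact hsup u hu h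
  · exact prob_le_one.trans (by simpa using ENNReal.ofReal_le_ofReal h)

theorem integral_ite_div_le [IsProbabilityMeasure μ] (hP : Measurable P)
    (hsup : ∀ u : ℝ, 0 ≤ u → u ≤ 1 → μ {ω | P ω ≤ u} ≤ ENNReal.ofReal u)
    (hR : ∀ ω, 1 ≤ R ω) (hb : Monotone b) (hb0 : ∀ n, 0 ≤ b n) {c : ℝ} (hc : 0 ≤ c)
    (hbc : ∑' k, ENNReal.ofReal (tailWeight k) * ENNReal.ofReal (b (k + 1)) ≤ ENNReal.ofReal c) :
    ∫ ω, (if P ω ≤ b (R ω) then (1 : ℝ) else 0) / (R ω : ℝ) ∂μ ≤ c := by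
  have hlint : ∫⁻ ω, ENNReal.ofReal ‖(if P ω ≤ b (R ω) then (1 : ℝ) else 0) / (R ω : ℝ)‖ ∂μ
      ≤ ENNReal.ofReal c :=
    calc _ = ∫⁻ ω, {ω | P ω ≤ b (R ω)}.indicator (fun ω ↦ (R ω : ℝ≥0∞)⁻¹) ω ∂μ := by
          refine lintegral_congr fun ω ↦ ?_
          by_cases h : P ω ≤ b (R ω)
          · simp [h, ENNReal.ofReal_inv_of_pos (Nat.cast_pos.2 (hR ω))]
          · simp [h]
      _ ≤ ∑' k, ENNReal.ofReal (tailWeight k) * μ {ω | P ω ≤ b (k + 1)} :=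
          lintegral_indicator_inv_le hP hb hR
      _ ≤ ∑' k, ENNReal.ofReal (tailWeight k) * ENNReal.ofReal (b (k + 1)) :=
          ENNReal.tsum_le_tsum fun k ↦ by
            gcongr
            exact measure_le_ofReal_of_superuniform hsup (hb0 _)
      _ ≤ ENNReal.ofReal c := hbc
  -- `‖∫ f‖ ≤ ∫⁻ ‖f‖` holds without any measurability of the integrand, hence none of `R`
  calc _ ≤ ‖∫ ω, (if P ω ≤ b (R ω) then (1 : ℝ) else 0) / (R ω : ℝ) ∂μ‖ := Real.le_norm_self _
    _ ≤ _ := norm_integral_le_lintegral_norm _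
    _ ≤ c := ENNReal.toReal_le_of_le_ofReal hc hlint

end Dependence

noncomputable def truncatedMean (ν : Measure ℝ) (r : ℝ) : ℝ := ∫ x, (if x ≤ r then x else 0) ∂ν

section TruncatedMean

variable {ν : Measure ℝ}

lemma ae_pos_of_measure_Iic_zero (hν : ν (Set.Iic 0) = 0) : ∀ᵐ x ∂ν, 0 < x := by
  rw [ae_iff]
  simp only [not_lt]
  exact hν

lemma ae_truncated_nonneg (hν : ν (Set.Iic 0) = 0) (r : ℝ) :
    ∀ᵐ x ∂ν, 0 ≤ if x ≤ r then x else 0 := by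
  filter_upwards [ae_pos_of_measure_Iic_zero hν] with x hx
  split_ifs
  exacts [hx.le, le_rfl]

lemma integrable_truncated [IsFiniteMeasure ν] (hν : ν (Set.Iic 0) = 0) (r : ℝ) :
    Integrable (fun x ↦ if x ≤ r then x else 0) ν := by
  refine .of_bound (measurable_id.ite measurableSet_Iic measurable_const).aestronglyMeasurable |r| ?_
  filter_upwards [ae_pos_of_measure_Iic_zero hν] with x hx
  split_ifs with h
  · rw [Real.norm_of_nonneg hx.le]
    exact h.trans (le_abs_self r)
  · simp

lemma truncatedMean_nonneg (hν : ν (Set.Iic 0) = 0) (r : ℝ) : 0 ≤ truncatedMean ν r :=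
  integral_nonneg_of_ae (ae_truncated_nonneg hν r)

lemma monotone_truncatedMean [IsFiniteMeasure ν] (hν : ν (Set.Iic 0) = 0) :
    Monotone (truncatedMean ν) := fun r s hrs ↦ by
  refine integral_mono_ae (integrable_truncated hν r) (integrable_truncated hν s) ?_
  filter_upwards [ae_pos_of_measure_Iic_zero hν] with x hx
  by_cases h : x ≤ r
  · simp [h, h.trans hrs]
  · rw [if_neg h]
    split_ifs <;> linarith

lemma tsum_tailWeight_mul_truncated_le_one (x : ℝ) :
    ∑' k : ℕ, ENNReal.ofReal (tailWeight k) *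
      ENNReal.ofReal (if x ≤ ((k + 1 : ℕ) : ℝ) then x else 0) ≤ 1 := by
  rcases le_or_gt x 0 with hx | hx
  · simp [apply_ite ENNReal.ofReal, ENNReal.ofReal_of_nonpos hx]
  have hceil : 1 ≤ ⌈x⌉₊ := Nat.one_le_iff_ne_zero.2 (Nat.ceil_pos.2 hx).ne'
  calc _ = ENNReal.ofReal x *
        ∑' k : ℕ, if ⌈x⌉₊ ≤ k + 1 then ENNReal.ofReal (tailWeight k) else 0 := by
        rw [← ENNReal.tsum_mul_left]
        refine tsum_congr fun k ↦ ?_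
        simp_rw [Nat.ceil_le]
        split_ifs <;> simp [mul_comm]
    _ = ENNReal.ofReal x * (⌈x⌉₊ : ℝ≥0∞)⁻¹ := by rw [tsum_ite_ofReal_tailWeight hceil]
    _ ≤ (⌈x⌉₊ : ℝ≥0∞) * (⌈x⌉₊ : ℝ≥0∞)⁻¹ := by
        gcongr
        exact (ENNReal.ofReal_le_ofReal (Nat.le_ceil x)).trans_eq (ENNReal.ofReal_natCast _)
    _ ≤ 1 := ENNReal.mul_inv_le_one _

lemma tsum_tailWeight_mul_truncatedMean_le_one [IsProbabilityMeasure ν]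
    (hν : ν (Set.Iic 0) = 0) :
    ∑' k : ℕ, ENNReal.ofReal (tailWeight k) *
      ENNReal.ofReal (truncatedMean ν ((k + 1 : ℕ) : ℝ)) ≤ 1 := by
  have hmeas (k : ℕ) :
      Measurable fun x : ℝ ↦ ENNReal.ofReal (if x ≤ ((k + 1 : ℕ) : ℝ) then x else 0) :=
    ENNReal.measurable_ofReal.comp (measurable_id.ite measurableSet_Iic measurable_const)
  calc _ = ∑' k : ℕ, ∫⁻ x, ENNReal.ofReal (tailWeight k) *
        ENNReal.ofReal (if x ≤ ((k + 1 : ℕ) : ℝ) then x else 0) ∂ν := by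
        refine tsum_congr fun k ↦ ?_
        rw [lintegral_const_mul _ (hmeas k), truncatedMean, ofReal_integral_eq_lintegral_ofReal
          (integrable_truncated hν _) (ae_truncated_nonneg hν _)]
    _ = ∫⁻ x, ∑' k : ℕ, ENNReal.ofReal (tailWeight k) *
        ENNReal.ofReal (if x ≤ ((k + 1 : ℕ) : ℝ) then x else 0) ∂ν :=
        (lintegral_tsum fun k ↦ ((hmeas k).const_mul _).aemeasurable).symm
    _ ≤ ∫⁻ _, 1 ∂ν := lintegral_mono tsum_tailWeight_mul_truncated_le_one
    _ = 1 := by simp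

lemma tsum_tailWeight_mul_truncatedMean_le [IsProbabilityMeasure ν] (hν : ν (Set.Iic 0) = 0)
    {c : ℝ} (hc : 0 ≤ c) :
    ∑' k : ℕ, ENNReal.ofReal (tailWeight k) *
      ENNReal.ofReal (c * truncatedMean ν ((k + 1 : ℕ) : ℝ)) ≤ ENNReal.ofReal c := by
  simp_rw [ENNReal.ofReal_mul hc, mul_left_comm (ENNReal.ofReal (tailWeight _))]
  rw [ENNReal.tsum_mul_left]
  exact mul_le_of_le_one_right' (tsum_tailWeight_mul_truncatedMean_le_one hν)

end TruncatedMean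

theorem per_null_bound_general_dependence_general
    {Ω : Type*} [MeasurableSpace Ω] (μ : Measure Ω) [IsProbabilityMeasure μ]
    (ν : Measure ℝ) [IsProbabilityMeasure ν]
    (hνpos : ν (Set.Iic 0) = 0)
    (β : ℕ → ℝ) (hβ : ∀ r : ℕ, β r = ∫ x, (if x ≤ (r : ℝ) then x else 0) ∂ν)
    (α : ℝ) (hα : α ∈ Set.Ioo (0 : ℝ) 1)
    (t : ℕ) (H0 : Finset ℕ) (hH0 : H0 ⊆ Finset.Icc 1 t)
    (A : ℕ → ℝ) (hA : ∀ i, 0 ≤ A i) (hAsum : ∑ i ∈ Finset.Icc 1 t, A i ≤ 1)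
    (P : ℕ → Ω → ℝ) (hPmeas : ∀ i, Measurable (P i))
    (hsup : ∀ i ∈ H0, ∀ u : ℝ, 0 ≤ u → u ≤ 1 →
      μ {ω | P i ω ≤ u} ≤ ENNReal.ofReal u)
    (R : Ω → ℕ) (hR : ∀ ω, 1 ≤ R ω) :
    (∀ i ∈ H0,
      ∫ ω, (if P i ω ≤ α * β (R ω) * A i then (1 : ℝ) else 0) / (R ω : ℝ) ∂μ
        ≤ α * A i) ∧
    ∑ i ∈ H0,
      ∫ ω, (if P i ω ≤ α * β (R ω) * A i then (1 : ℝ) else 0) / (R ω : ℝ) ∂μ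
        ≤ α := by
  obtain rfl : β = fun r : ℕ ↦ truncatedMean ν r := funext hβ
  have hα0 : 0 ≤ α := hα.1.le
  have per_null : ∀ i ∈ H0,
      ∫ ω, (if P i ω ≤ α * truncatedMean ν (R ω) * A i then (1 : ℝ) else 0) / (R ω : ℝ) ∂μ
        ≤ α * A i := by
    intro i hi
    have hc : 0 ≤ α * A i := mul_nonneg hα0 (hA i)
    simp only [mul_right_comm α (truncatedMean ν _) (A i)]
    exact integral_ite_div_le (hPmeas i) (hsup i hi) hR
      (((monotone_truncatedMean hνpos).comp Nat.mono_cast).const_mul hc)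
      (fun n ↦ mul_nonneg hc (truncatedMean_nonneg hνpos n)) hc
      (tsum_tailWeight_mul_truncatedMean_le hνpos hc)
  refine ⟨per_null, ?_⟩
  calc _ ≤ ∑ i ∈ H0, α * A i := Finset.sum_le_sum per_null
    _ = α * ∑ i ∈ H0, A i := (Finset.mul_sum _ _ _).symm
    _ ≤ α * ∑ i ∈ Finset.Icc 1 t, A i := by
        gcongr
        exact fun i _ _ ↦ hA i
    _ ≤ α := mul_le_of_le_one_right hα0 hAsum

/-- Per-null-hypothesis bound under general dependence: if each null `P_i` is
super-uniform, `A_i ≥ 0` are constants, `β` is a shape function arising from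
a distribution `ν` on the positive reals, and `R ≥ 1` is any integer-valued
random variable (arbitrarily dependent on the p-values), then
`E[1(P_i ≤ α·β(R)·A_i)/R] ≤ α·A_i` for each null `i`; consequently, summing
over nulls with `∑ A_i ≤ 1` yields the FDR bound
`∑_{i ∈ H₀} E[1(P_i ≤ α·β(R)·A_i)/R] ≤ α`. -/
theorem per_null_bound_general_dependence
    {Ω : Type*} [MeasurableSpace Ω] (μ : Measure Ω) [IsProbabilityMeasure μ]
    (ν : Measure ℝ) [IsProbabilityMeasure ν]
    (hνpos : ν (Set.Iic 0) = 0) (hνint : Integrable id ν)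
    (β : ℕ → ℝ) (hβ : ∀ r : ℕ, β r = ∫ x, (if x ≤ (r : ℝ) then x else 0) ∂ν)
    (α : ℝ) (hα : α ∈ Set.Ioo (0 : ℝ) 1)
    (t : ℕ) (H0 : Finset ℕ) (hH0 : H0 ⊆ Finset.Icc 1 t)
    (A : ℕ → ℝ) (hA : ∀ i, 0 ≤ A i) (hAsum : ∑ i ∈ Finset.Icc 1 t, A i ≤ 1)
    (P : ℕ → Ω → ℝ) (hPmeas : ∀ i, Measurable (P i))
    (hrange : ∀ i ω, P i ω ∈ Set.Icc (0 : ℝ) 1)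
    (hsup : ∀ i ∈ H0, ∀ u : ℝ, 0 ≤ u → u ≤ 1 →
      μ {ω | P i ω ≤ u} ≤ ENNReal.ofReal u)
    (R : Ω → ℕ) (hRmeas : Measurable R) (hR : ∀ ω, 1 ≤ R ω) :
    (∀ i ∈ H0,
      ∫ ω, (if P i ω ≤ α * β (R ω) * A i then (1 : ℝ) else 0) / (R ω : ℝ) ∂μ
        ≤ α * A i) ∧
    ∑ i ∈ H0,
      ∫ ω, (if P i ω ≤ α * β (R ω) * A i then (1 : ℝ) else 0) / (R ω : ℝ) ∂μ
        ≤ α :=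
  per_null_bound_general_dependence_general μ ν hνpos β hβ α hα t H0 hH0 A hA hAsum P hPmeas hsup R
    hR
end

section
/- Weight-recycling version controls recent-FDR deterministically in the self-consistency sense: if at stage t the rejection set R_t ∩ C_t is the largest subset S of C_t with P_i ≤ α·max(1,|S|)·A_i for all i ∈ S, and each null P_i is independent super-uniform with the weights A_i deterministic and ∑_{i∈C_t} A_i ≤ 1, then under the positive-dependence condition (P(max(1,|R_t∩C_t|) ≤ r | P_i ≤ u) nondecreasing in u for each null i ∈ C_t and each r), E[|H_0 ∩ R_t ∩ C_t| / max(1,|R_t ∩ C_t|)] ≤ α. -/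
/-!
Write `K = max 1 |R|`, so that the false discovery proportion is `∑ 1{i ∈ R} / K` over the nulls
`i ∈ C`. By self-consistency, `{i ∈ R, K = k} ⊆ {K = k, P_i ≤ α k A_i}`, and super-uniformity gives
`μ(P_i ≤ α k A_i) ≤ α k A_i`. Positive dependence says that `μ(K ≤ r | P_i ≤ α k A_i)` increases with
`k`, which makes `∑_k μ(K = k, P_i ≤ α k A_i) / k` telescope to at most `α A_i`
(Benjamini–Yekutieli). Summing over the nulls and using `∑ A_i ≤ 1` gives `α`.
-/

open MeasureTheory Finset

theorem Finset.card_inter_div_max_one_card_eq_sum {ι : Type*} [DecidableEq ι] {H C R : Finset ι}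
    (hRC : R ⊆ C) :
    ((H ∩ R).card : ℝ) / (max 1 R.card : ℝ)
      = ∑ i ∈ H ∩ C, if i ∈ R then ((max 1 R.card : ℕ) : ℝ)⁻¹ else 0 := by
  have hinter : H ∩ R = {i ∈ H ∩ C | i ∈ R} := by
    ext i; have := @hRC i; simp only [mem_inter, mem_filter]; tauto
  rw [hinter, card_filter, Nat.cast_sum, sum_div]
  refine sum_congr rfl fun i _ => ?_
  split_ifs <;> simp [div_eq_mul_inv]

section

variable {Ω : Type*} [MeasurableSpace Ω] {μ : Measure Ω}

theorem measurableSet_setOf_comp_of_countable {β : Type*} [Countable β] {f : Ω → β}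
    (hf : ∀ b, MeasurableSet {ω | f ω = b}) (p : β → Prop) : MeasurableSet {ω | p (f ω)} := by
  have : {ω | p (f ω)} = ⋃ b ∈ {b | p b}, {ω | f ω = b} := by ext; simp
  rw [this]
  exact .biUnion (Set.to_countable _) fun b _ => hf b

theorem measureReal_inter_div_le_of_measure_inter_div_le {s t t' : Set Ω}
    (h : μ t ≠ 0 → μ (s ∩ t) / μ t ≤ μ (s ∩ t') / μ t') :
    μ.real (s ∩ t) / μ.real t ≤ μ.real (s ∩ t') / μ.real t' := by
  by_cases ht : μ t = 0
  · simp only [measureReal_def, ht, ENNReal.toReal_zero, div_zero]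
    positivity
  have hle_one : μ (s ∩ t') / μ t' ≤ 1 :=
    ENNReal.div_le_of_le_mul (by simpa using measure_mono Set.inter_subset_right)
  simpa only [measureReal_def, ENNReal.toReal_div] using
    ENNReal.toReal_mono (ne_top_of_le_ne_top ENNReal.one_ne_top hle_one) (h ht)

variable [IsFiniteMeasure μ]

/-- With `q j = μ(B j ∩ A j) / μ(A j) ∈ [0, 1]`, the `j`-th summand is at most `c (q (j+1) - q j)`. -/
theorem sum_measureReal_diff_inter_div_le (A B : ℕ → Set Ω) (hB : ∀ r, MeasurableSet (B r))
    (hB_mono : Monotone B) {c : ℝ} (hc : 0 ≤ c) (hA : ∀ r : ℕ, μ.real (A r) ≤ c * r)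
    (hcond : ∀ r, Monotone fun j => μ.real (B r ∩ A j) / μ.real (A j)) (N : ℕ) :
    ∑ j ∈ range N, μ.real ((B (j + 1) \ B j) ∩ A (j + 1)) / (j + 1) ≤ c := by
  set q : ℕ → ℝ := fun r => μ.real (B r ∩ A r) / μ.real (A r)
  have hq_nonneg (r : ℕ) : 0 ≤ q r := by positivity
  have hq_le_one (r : ℕ) : q r ≤ 1 :=
    div_le_one_of_le₀ (measureReal_mono Set.inter_subset_right) measureReal_nonneg
  have hq_mono : Monotone q := monotone_nat_of_le_succ fun r =>
    (hcond r r.le_succ).trans <| div_le_div_of_nonneg_right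
      (measureReal_mono (Set.inter_subset_inter_left _ (hB_mono r.le_succ))) measureReal_nonneg
  have hstep (j : ℕ) :
      μ.real ((B (j + 1) \ B j) ∩ A (j + 1)) / (j + 1) ≤ c * (q (j + 1) - q j) := by
    set a := μ.real (A (j + 1))
    have hsplit : μ.real ((B (j + 1) \ B j) ∩ A (j + 1))
        = μ.real (B (j + 1) ∩ A (j + 1)) - μ.real (B j ∩ A (j + 1)) := by
      have := measureReal_inter_add_sdiff (μ := μ) (s := B (j + 1) ∩ A (j + 1)) (hB j)
      have hinter : B (j + 1) ∩ A (j + 1) ∩ B j = B j ∩ A (j + 1) := by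
        have := hB_mono j.le_succ; ext; simp only [Set.mem_inter_iff]; tauto
      rw [hinter, Set.inter_sdiff_right_comm] at this
      linarith
    have hcancel {X : Set Ω} (hX : X ⊆ A (j + 1)) : μ.real X / a * a = μ.real X :=
      div_mul_cancel_of_imp fun ha => le_antisymm (ha ▸ measureReal_mono hX) measureReal_nonneg
    have hlower : q j * a ≤ μ.real (B j ∩ A (j + 1)) :=
      (mul_le_mul_of_nonneg_right (hcond j j.le_succ) measureReal_nonneg).trans_eq
        (hcancel Set.inter_subset_right)
    have hnum : μ.real ((B (j + 1) \ B j) ∩ A (j + 1)) ≤ (q (j + 1) - q j) * a := by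
      rw [hsplit, ← hcancel (X := B (j + 1) ∩ A (j + 1)) Set.inter_subset_right]
      linarith
    have hdq : 0 ≤ q (j + 1) - q j := sub_nonneg.2 (hq_mono j.le_succ)
    have ha : a ≤ c * (j + 1) := by simpa using hA (j + 1)
    rw [div_le_iff₀ (by positivity)]
    nlinarith
  calc ∑ j ∈ range N, μ.real ((B (j + 1) \ B j) ∩ A (j + 1)) / (j + 1)
      ≤ ∑ j ∈ range N, c * (q (j + 1) - q j) := sum_le_sum fun j _ => hstep j
    _ = c * (q N - q 0) := by rw [← mul_sum, sum_range_sub]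
    _ ≤ c := by nlinarith [hq_le_one N, hq_nonneg 0]

theorem integral_indicator_comp_eq_sum {E : Set Ω} (hE : MeasurableSet E) {K : Ω → ℕ}
    (hK : Measurable K) {N : ℕ} (hKN : ∀ ω, K ω ≤ N) (g : ℕ → ℝ) :
    ∫ ω, E.indicator (fun ω => g (K ω)) ω ∂μ
      = ∑ k ∈ range (N + 1), μ.real (E ∩ {ω | K ω = k}) * g k := by
  have hsum (ω : Ω) : E.indicator (fun ω => g (K ω)) ω
      = ∑ k ∈ range (N + 1), (E ∩ {ω | K ω = k}).indicator (fun _ => g k) ω := by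
    by_cases hω : ω ∈ E
    · rw [sum_eq_single_of_mem (K ω) (mem_range.2 (Nat.lt_succ_of_le (hKN ω)))
        fun k _ hk => Set.indicator_of_notMem (fun h => hk h.2.symm) _]
      simp [hω]
    · simp [hω]
  have hEK (k : ℕ) : MeasurableSet (E ∩ {ω | K ω = k}) := hE.inter (hK (measurableSet_singleton k))
  simp only [hsum]
  rw [integral_finsetSum _ fun k _ => (integrable_const _).indicator (hEK k)]
  exact sum_congr rfl fun k _ => integral_indicator_const _ (hEK k)

theorem integrable_indicator_inv_natCast {E : Set Ω} (hE : MeasurableSet E) {K : Ω → ℕ}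
    (hK : Measurable K) : Integrable (E.indicator fun ω => (K ω : ℝ)⁻¹) μ := by
  refine .of_bound (Measurable.indicator (by fun_prop) hE).aestronglyMeasurable 1
    (ae_of_all _ fun ω => (norm_indicator_le_norm_self _ ω).trans ?_)
  rw [Real.norm_of_nonneg (by positivity)]
  exact Nat.cast_inv_le_one _

theorem integral_indicator_inv_natCast_le {E : Set Ω} (hE : MeasurableSet E) {K : Ω → ℕ}
    (hK : Measurable K) {N : ℕ} (hKN : ∀ ω, K ω ≤ N) (A : ℕ → Set Ω)
    (hEA : ∀ k, E ∩ {ω | K ω = k} ⊆ A k) {c : ℝ} (hc : 0 ≤ c)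
    (hA : ∀ r : ℕ, μ.real (A r) ≤ c * r)
    (hcond : ∀ r : ℕ, Monotone fun j => μ.real ({ω | K ω ≤ r} ∩ A j) / μ.real (A j)) :
    ∫ ω, E.indicator (fun ω => (K ω : ℝ)⁻¹) ω ∂μ ≤ c := by
  -- the `k = 0` term vanishes because `(0 : ℝ)⁻¹ = 0`
  rw [integral_indicator_comp_eq_sum hE hK hKN (fun k => (k : ℝ)⁻¹), sum_range_succ']
  simp only [Nat.cast_zero, inv_zero, mul_zero, add_zero, Nat.cast_succ, ← div_eq_mul_inv]
  refine (sum_le_sum fun j _ => ?_).trans <| sum_measureReal_diff_inter_div_le A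
    (fun r => {ω | K ω ≤ r}) (fun r => hK measurableSet_Iic)
    (fun _ _ hab _ hω => le_trans hω hab) hc hA hcond N
  refine div_le_div_of_nonneg_right (measureReal_mono fun ω hω =>
    ⟨⟨hω.2.le, fun h => Nat.not_succ_le_self j (hω.2.symm.trans_le h)⟩, hEA _ hω⟩) (by positivity)

section RejectionSet

variable {ι : Type*} [Countable ι] {R : Ω → Finset ι}

theorem measurable_max_one_card (hR : ∀ S, MeasurableSet {ω | R ω = S}) :
    Measurable fun ω => max 1 (R ω).card :=
  measurable_to_countable' fun k => measurableSet_setOf_comp_of_countable hR (max 1 ·.card = k)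

theorem integral_indicator_mem_inv_max_one_card_le (hR : ∀ S, MeasurableSet {ω | R ω = S})
    {N : ℕ} (hRN : ∀ ω, (R ω).card ≤ N) (i : ι) {p : Ω → ℝ} (hp : ∀ ω, p ω ≤ 1) {a : ℝ}
    (ha : 0 ≤ a) (hsc : ∀ ω, i ∈ R ω → p ω ≤ (max 1 (R ω).card : ℝ) * a)
    (hsup : ∀ u : ℝ, 0 ≤ u → u ≤ 1 → μ {ω | p ω ≤ u} ≤ ENNReal.ofReal u)
    (hposdep : ∀ r : ℕ, ∀ u v : ℝ, 0 ≤ u → u ≤ v → v ≤ 1 → μ {ω | p ω ≤ u} ≠ 0 →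
      μ ({ω | max 1 (R ω).card ≤ r} ∩ {ω | p ω ≤ u}) / μ {ω | p ω ≤ u}
        ≤ μ ({ω | max 1 (R ω).card ≤ r} ∩ {ω | p ω ≤ v}) / μ {ω | p ω ≤ v}) :
    ∫ ω, {ω | i ∈ R ω}.indicator (fun ω => ((max 1 (R ω).card : ℕ) : ℝ)⁻¹) ω ∂μ ≤ a := by
  -- clipped at `1` so that `hsup` and `hposdep` apply; harmless since `p ≤ 1`
  set u : ℕ → ℝ := fun k => min (k * a) 1
  have hu_mono : Monotone u := fun k l hkl => by simp only [u]; gcongr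
  have hu_nonneg (k : ℕ) : 0 ≤ u k := le_min (by positivity) zero_le_one
  have hu_le_one (k : ℕ) : u k ≤ 1 := min_le_right _ _
  refine integral_indicator_inv_natCast_le (measurableSet_setOf_comp_of_countable hR (i ∈ ·))
    (measurable_max_one_card hR) (fun ω => max_le_max le_rfl (hRN ω)) (fun k => {ω | p ω ≤ u k})
    ?_ ha (fun r => ?_) (fun r => ?_)
  · rintro k ω ⟨hiR, hk : max 1 (R ω).card = k⟩
    refine le_min ?_ (hp ω)
    simpa [← hk] using hsc ω hiR
  · calc μ.real {ω | p ω ≤ u r} ≤ u r :=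
          ENNReal.toReal_le_of_le_ofReal (hu_nonneg r) (hsup _ (hu_nonneg r) (hu_le_one r))
      _ ≤ a * r := (min_le_left _ _).trans_eq (mul_comm _ _)
  · exact monotone_nat_of_le_succ fun j => measureReal_inter_div_le_of_measure_inter_div_le
      (hposdep r _ _ (hu_nonneg j) (hu_mono j.le_succ) (hu_le_one _))

end RejectionSet

end

theorem recycling_recent_fdr_control_general
    {Ω : Type*} [MeasurableSpace Ω] (μ : Measure Ω) [IsProbabilityMeasure μ]
    (C : Finset ℕ)
    (A : ℕ → ℝ) (hA : ∀ i, 0 ≤ A i) (hAsum : ∑ i ∈ C, A i ≤ 1)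
    (H0 : Finset ℕ) (α : ℝ) (hα : α ∈ Set.Ioo (0 : ℝ) 1)
    (P : ℕ → Ω → ℝ)
    (hrange : ∀ i ω, P i ω ∈ Set.Icc (0 : ℝ) 1)
    (hsup : ∀ i ∈ H0 ∩ C, ∀ u : ℝ, 0 ≤ u → u ≤ 1 →
      μ {ω | P i ω ≤ u} ≤ ENNReal.ofReal u)
    (Rc : Ω → Finset ℕ)
    (hRmeas : ∀ S : Finset ℕ, MeasurableSet {ω | Rc ω = S})
    (hRsub : ∀ ω, Rc ω ⊆ C)
    (hsc : ∀ ω, ∀ i ∈ Rc ω, P i ω ≤ α * (max 1 (Rc ω).card : ℝ) * A i)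
    (hposdep : ∀ i ∈ H0 ∩ C, ∀ r : ℕ, ∀ u v : ℝ, 0 ≤ u → u ≤ v → v ≤ 1 →
      μ {ω | P i ω ≤ u} ≠ 0 →
      μ ({ω | max 1 (Rc ω).card ≤ r} ∩ {ω | P i ω ≤ u}) / μ {ω | P i ω ≤ u}
        ≤ μ ({ω | max 1 (Rc ω).card ≤ r} ∩ {ω | P i ω ≤ v}) / μ {ω | P i ω ≤ v}) :
    ∫ ω, ((H0 ∩ Rc ω).card : ℝ) / (max 1 (Rc ω).card : ℝ) ∂μ ≤ α := by
  have hfdp (ω : Ω) : ((H0 ∩ Rc ω).card : ℝ) / (max 1 (Rc ω).card : ℝ) = ∑ i ∈ H0 ∩ C,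
      {ω | i ∈ Rc ω}.indicator (fun ω => ((max 1 (Rc ω).card : ℕ) : ℝ)⁻¹) ω := by
    simp only [Finset.card_inter_div_max_one_card_eq_sum (hRsub ω), Set.indicator_apply,
      Set.mem_ofPred_eq]
  have hnull (i : ℕ) (hi : i ∈ H0 ∩ C) :
      ∫ ω, {ω | i ∈ Rc ω}.indicator (fun ω => ((max 1 (Rc ω).card : ℕ) : ℝ)⁻¹) ω ∂μ
        ≤ α * A i :=
    integral_indicator_mem_inv_max_one_card_le hRmeas (fun ω => card_le_card (hRsub ω)) i
      (fun ω => (hrange i ω).2) (mul_nonneg hα.1.le (hA i))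
      (fun ω hiR => (hsc ω i hiR).trans_eq (by ring)) (hsup i hi) (hposdep i hi)
  calc ∫ ω, ((H0 ∩ Rc ω).card : ℝ) / (max 1 (Rc ω).card : ℝ) ∂μ
      = ∑ i ∈ H0 ∩ C,
          ∫ ω, {ω | i ∈ Rc ω}.indicator (fun ω => ((max 1 (Rc ω).card : ℕ) : ℝ)⁻¹) ω ∂μ := by
        simp only [hfdp]
        exact integral_finsetSum _ fun i _ =>
          integrable_indicator_inv_natCast
            (measurableSet_setOf_comp_of_countable hRmeas (i ∈ ·)) (measurable_max_one_card hRmeas)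
    _ ≤ ∑ i ∈ H0 ∩ C, α * A i := sum_le_sum hnull
    _ = α * ∑ i ∈ H0 ∩ C, A i := (mul_sum _ _ _).symm
    _ ≤ α * ∑ i ∈ C, A i := mul_le_mul_of_nonneg_left
        (sum_le_sum_of_subset_of_nonneg inter_subset_right fun i _ _ => hA i) hα.1.le
    _ ≤ α := mul_le_of_le_one_right hα.1.le hAsum

/-- The weight-recycling (decaying-memory) version controls the recent FDR:
if at stage `t` the rejection set within the active window, `R_t ∩ C_t`, is
the largest subset `S` of `C_t` with `P_i ≤ α·max(1,|S|)·A_i` for all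
`i ∈ S`, the weights `A_i` are deterministic with `∑_{i ∈ C_t} A_i ≤ 1`,
each null `P_i` is super-uniform, and the positive-dependence condition
holds (`P(max(1,|R_t ∩ C_t|) ≤ r | P_i ≤ u)` nondecreasing in `u` for each
null `i ∈ C_t` and each `r`), then
`E[|H₀ ∩ R_t ∩ C_t| / max(1,|R_t ∩ C_t|)] ≤ α`. -/
theorem recycling_recent_fdr_control
    {Ω : Type*} [MeasurableSpace Ω] (μ : Measure Ω) [IsProbabilityMeasure μ]
    (t : ℕ) (C : Finset ℕ) (hC : C ⊆ Finset.Icc 1 t)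
    (A : ℕ → ℝ) (hA : ∀ i, 0 ≤ A i) (hAsum : ∑ i ∈ C, A i ≤ 1)
    (H0 : Finset ℕ) (α : ℝ) (hα : α ∈ Set.Ioo (0 : ℝ) 1)
    (P : ℕ → Ω → ℝ) (hPmeas : ∀ i, Measurable (P i))
    (hrange : ∀ i ω, P i ω ∈ Set.Icc (0 : ℝ) 1)
    (hsup : ∀ i ∈ H0 ∩ C, ∀ u : ℝ, 0 ≤ u → u ≤ 1 →
      μ {ω | P i ω ≤ u} ≤ ENNReal.ofReal u)
    (Rc : Ω → Finset ℕ)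
    (hRmeas : ∀ S : Finset ℕ, MeasurableSet {ω | Rc ω = S})
    (hRsub : ∀ ω, Rc ω ⊆ C)
    (hsc : ∀ ω, ∀ i ∈ Rc ω, P i ω ≤ α * (max 1 (Rc ω).card : ℝ) * A i)
    (hmax : ∀ ω, ∀ S ⊆ C, (∀ i ∈ S, P i ω ≤ α * (max 1 S.card : ℝ) * A i) →
      S ⊆ Rc ω)
    (hposdep : ∀ i ∈ H0 ∩ C, ∀ r : ℕ, ∀ u v : ℝ, 0 ≤ u → u ≤ v → v ≤ 1 →
      μ {ω | P i ω ≤ u} ≠ 0 →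
      μ ({ω | max 1 (Rc ω).card ≤ r} ∩ {ω | P i ω ≤ u}) / μ {ω | P i ω ≤ u}
        ≤ μ ({ω | max 1 (Rc ω).card ≤ r} ∩ {ω | P i ω ≤ v}) / μ {ω | P i ω ≤ v}) :
    ∫ ω, ((H0 ∩ Rc ω).card : ℝ) / (max 1 (Rc ω).card : ℝ) ∂μ ≤ α :=
  recycling_recent_fdr_control_general μ C A hA hAsum H0 α hα P hrange hsup Rc hRmeas hRsub hsc
    hposdep
end

section
/- Adaptive stopping preserves FDR: suppose a testing procedure over stages 1,...,t_max with random weights A_i satisfies FDR(t_max) ≤ α whenever the weights satisfy the required measurability (A_i determined by the first τ_i p-values) and ∑A_i ≤ 1. If T is a stopping time and we set A_t = 0 for all t > T (which preserves both conditions), then the rejection set at stage t_max equals the rejection set at stage T (no rejections occur after T among stages with zero weight whose p-values thus never satisfy P_i ≤ αβ(r)·0 for P_i > 0), and hence E[FDP(T)] ≤ α. -/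
open Finset Classical

/-! Once every hypothesis `i ≤ t₀` has passed its deadline, the active sets after `t₀` are
disjoint from `R_{t₀}`, so nothing is carried over; and a positive p-value with zero weight
never passes `P_i ≤ thr · 0`, so nothing new is rejected. Hence `R_t = R_{t₀}` for `t ≥ t₀`. -/

section Stopping

variable {d : ℕ → ℕ} {A P : ℕ → ℝ} {α : ℝ} {β : ℕ → ℝ}

theorem lt_of_mem_toadC {t₀ t i : ℕ} (hd : ∀ i ≤ t₀, d i ≤ t₀) (ht : t₀ < t)
    (hi : i ∈ toadC d t) : t₀ < i := by
  simp only [toadC, mem_filter, mem_Icc] at hi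
  by_contra! hle
  have := hd i hle
  omega

theorem toadR_succ_eq_self {t : ℕ} (hP : ∀ i ∈ toadC d (t + 1), 0 < P i)
    (hA : ∀ i ∈ toadC d (t + 1), A i = 0)
    (hdisj : Disjoint (toadR d A P α β t) (toadC d (t + 1))) :
    toadR d A P α β (t + 1) = toadR d A P α β t := by
  have hnew : ∀ r, (toadC d (t + 1)).filter (fun i => P i ≤ α * β r * A i) = ∅ :=
    fun r => filter_false_of_mem fun i hi => by
      rw [hA i hi, mul_zero, not_le]
      exact hP i hi
  rw [toadR]
  simp only [sdiff_eq_self_of_disjoint hdisj, hnew, union_empty]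

theorem toadR_eq_of_le {t₀ t : ℕ} (hP : ∀ i, t₀ < i → 0 < P i) (hA : ∀ i, t₀ < i → A i = 0)
    (hd : ∀ i ≤ t₀, d i ≤ t₀) (ht : t₀ ≤ t) :
    toadR d A P α β t = toadR d A P α β t₀ := by
  induction t, ht using Nat.le_induction with
  | base => rfl
  | succ t ht ih =>
    have hactive : ∀ i ∈ toadC d (t + 1), t₀ < i := fun i hi =>
      lt_of_mem_toadC hd (Nat.lt_succ_of_le ht) hi
    have hdisj : Disjoint (toadR d A P α β t) (toadC d (t + 1)) := by
      rw [ih, disjoint_left]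
      exact fun i hR hC => (le_of_mem_toadR hR).not_gt (hactive i hC)
    rw [toadR_succ_eq_self (fun i hi => hP i (hactive i hi)) (fun i hi => hA i (hactive i hi))
      hdisj, ih]

end Stopping

open MeasureTheory

theorem toad_adaptive_stopping_general
    {Ω : Type*} [MeasurableSpace Ω] (μ : Measure Ω)
    (tmax : ℕ) (d : ℕ → ℕ)
    (P : ℕ → Ω → ℝ) (hP : ∀ i ω, 0 < P i ω)
    (A : ℕ → Ω → ℝ)
    (T : Ω → ℕ) (hT : ∀ ω, T ω ≤ tmax)
    (hdT : ∀ ω, ∀ i, i ≤ T ω → d i ≤ T ω)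
    (α : ℝ)
    (β : ℕ → ℝ)
    (Atil : ℕ → Ω → ℝ) (hAtil : ∀ i ω, Atil i ω = if i ≤ T ω then A i ω else 0)
    (H0 : Finset ℕ)
    (hFDR : ∫ ω,
        ((H0 ∩ toadR d (fun i => Atil i ω) (fun i => P i ω) α β tmax).card : ℝ)
          / (max 1 (toadR d (fun i => Atil i ω) (fun i => P i ω) α β tmax).card : ℝ)
        ∂μ ≤ α) :
    (∀ ω, toadR d (fun i => Atil i ω) (fun i => P i ω) α β tmax
        = toadR d (fun i => Atil i ω) (fun i => P i ω) α β (T ω)) ∧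
    ∫ ω,
        ((H0 ∩ toadR d (fun i => Atil i ω) (fun i => P i ω) α β (T ω)).card : ℝ)
          / (max 1 (toadR d (fun i => Atil i ω) (fun i => P i ω) α β (T ω)).card : ℝ)
        ∂μ ≤ α := by
  have hstop : ∀ ω, toadR d (fun i => Atil i ω) (fun i => P i ω) α β tmax
      = toadR d (fun i => Atil i ω) (fun i => P i ω) α β (T ω) := fun ω =>
    toadR_eq_of_le (fun i _ => hP i ω)
      (fun i hi => by simp only [hAtil, if_neg (not_le.mpr hi)]) (hdT ω) (hT ω)
  refine ⟨hstop, ?_⟩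
  simpa only [hstop] using hFDR

/-- Adaptive stopping preserves FDR: run TOAD over stages `1,…,tmax` with the
modified weights `Ã_i = A_i·1(i ≤ T)` for a stopping time `T`. If all
p-values are strictly positive, the bookkeeping is consistent (deadlines of
tested hypotheses do not extend past `T`), and the procedure with the
modified weights satisfies `FDR(tmax) ≤ α`, then the rejection set at stage
`tmax` equals the rejection set at stage `T` (no rejections occur after `T`
since zero-weight hypotheses never satisfy `P_i ≤ α·β(r)·0` when `P_i > 0`),
and hence `E[FDP(T)] ≤ α`. -/
theorem toad_adaptive_stopping
    {Ω : Type*} [MeasurableSpace Ω] (μ : Measure Ω) [IsProbabilityMeasure μ]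
    (tmax : ℕ) (d : ℕ → ℕ) (hd : ∀ i, i ≤ d i)
    (P : ℕ → Ω → ℝ) (hP : ∀ i ω, 0 < P i ω)
    (A : ℕ → Ω → ℝ) (hA : ∀ i ω, 0 ≤ A i ω)
    (hAsum : ∀ ω, ∑ i ∈ Finset.Icc 1 tmax, A i ω ≤ 1)
    (T : Ω → ℕ) (hT : ∀ ω, T ω ≤ tmax)
    (hdT : ∀ ω, ∀ i, i ≤ T ω → d i ≤ T ω)
    (α : ℝ) (hα : α ∈ Set.Ioo (0 : ℝ) 1)
    (β : ℕ → ℝ) (hβ : Monotone β) (hβ0 : β 0 = 0)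
    (Atil : ℕ → Ω → ℝ) (hAtil : ∀ i ω, Atil i ω = if i ≤ T ω then A i ω else 0)
    (H0 : Finset ℕ)
    (hFDR : ∫ ω,
        ((H0 ∩ toadR d (fun i => Atil i ω) (fun i => P i ω) α β tmax).card : ℝ)
          / (max 1 (toadR d (fun i => Atil i ω) (fun i => P i ω) α β tmax).card : ℝ)
        ∂μ ≤ α) :
    (∀ ω, toadR d (fun i => Atil i ω) (fun i => P i ω) α β tmax
        = toadR d (fun i => Atil i ω) (fun i => P i ω) α β (T ω)) ∧
    ∫ ω,
        ((H0 ∩ toadR d (fun i => Atil i ω) (fun i => P i ω) α β (T ω)).card : ℝ)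
          / (max 1 (toadR d (fun i => Atil i ω) (fun i => P i ω) α β (T ω)).card : ℝ)
        ∂μ ≤ α :=
  toad_adaptive_stopping_general μ tmax d P hP A T hT hdT α β Atil hAtil H0 hFDR
end
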